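/- arXiv:math/0307121 — 5 statements merged into one kernel-verified Lean document; each statement's English description precedes it below -/
import Mathlib

section
/- Let G be a finite subgroup of U(2) and let Z = G ∩ {scalar matrices}. Then Z is contained in every maximal abelian subgroup of G, and if H₁ and H₂ are two distinct maximal abelian subgroups of G (maximal among abelian subgroups of G, with respect to inclusion), then H₁ ∩ H₂ = Z. -/
/-!
Scalar matrices are central, so by maximality every maximal abelian subgroup of `G` absorbs
them. A non-scalar `g ∈ M₂(K)` is cyclic: every matrix commuting with it has the form
`α • 1 + β • g`, so the centralizer of `g` is abelian. A non-scalar element of `H₁ ∩ H₂` would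
therefore force both `H₁` and `H₂` to equal its centralizer in `G`.
-/

open Matrix

/-- `MaxAbelianIn H G`: `H` is a maximal abelian subgroup of `G` (both viewed as
subgroups of U(2)), i.e. `H ≤ G`, `H` is abelian, and `H` is maximal with respect to
inclusion among abelian subgroups contained in `G`. -/
def MaxAbelianIn (H G : Subgroup (Matrix.unitaryGroup (Fin 2) ℂ)) : Prop :=
  H ≤ G ∧ IsMulCommutative H ∧
    ∀ H' : Subgroup (Matrix.unitaryGroup (Fin 2) ℂ),
      H' ≤ G → IsMulCommutative H' → H ≤ H' → H' = H

section MaximalCommutative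

open Subgroup

variable {M : Type*} [Group M] {G H H₁ H₂ : Subgroup M}

theorem Maximal.mem_of_forall_commute
    (hH : Maximal (fun K : Subgroup M ↦ K ≤ G ∧ IsMulCommutative K) H)
    {z : M} (hzG : z ∈ G) (hz : ∀ h ∈ H, Commute h z) : z ∈ H := by
  set K := closure (insert z (H : Set M))
  have hKG : K ≤ G := (closure_le G).2 (Set.insert_subset hzG hH.prop.1)
  have hK : IsMulCommutative K := by
    refine isMulCommutative_closure ?_
    rintro a (rfl | ha) b (rfl | hb)
    · rfl
    · exact (hz b hb).symm
    · exact hz a ha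
    · have := hH.prop.2
      exact setLike_mul_comm ha hb
  have hHK : H ≤ K := fun h hh ↦ subset_closure (Set.mem_insert_of_mem z hh)
  rw [← hH.eq_of_ge ⟨hKG, hK⟩ hHK]
  exact subset_closure (Set.mem_insert z _)

theorem Maximal.eq_of_mem_of_isMulCommutative_centralizer
    (h₁ : Maximal (fun K : Subgroup M ↦ K ≤ G ∧ IsMulCommutative K) H₁)
    (h₂ : Maximal (fun K : Subgroup M ↦ K ≤ G ∧ IsMulCommutative K) H₂)
    {x : M} (hx₁ : x ∈ H₁) (hx₂ : x ∈ H₂) (hx : IsMulCommutative (centralizer {x})) :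
    H₁ = H₂ := by
  have hC : centralizer {x} ⊓ G ≤ G ∧ IsMulCommutative ↥(centralizer {x} ⊓ G) :=
    ⟨inf_le_right, .of_setLike_mul_comm fun a ha b hb ↦ setLike_mul_comm ha.1 hb.1⟩
  have hle : ∀ {H : Subgroup M}, H ≤ G ∧ IsMulCommutative H → x ∈ H → H ≤ centralizer {x} ⊓ G :=
    fun ⟨hHG, _⟩ hxH _ ha ↦ ⟨mem_centralizer_singleton_iff.2 (setLike_mul_comm ha hxH), hHG ha⟩
  exact (h₁.eq_of_le hC (hle h₁.prop hx₁)).trans (h₂.eq_of_le hC (hle h₂.prop hx₂)).symm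

end MaximalCommutative

namespace Matrix

theorem commute_of_coe_eq_smul_one {n R : Type*} [Fintype n] [DecidableEq n] [CommRing R]
    [StarRing R] {x z : unitaryGroup n R} {c : R} (hz : (z : Matrix n n R) = c • 1) :
    Commute x z :=
  Subtype.ext (by simp [hz])

variable {K : Type*} [Field K]

theorem exists_eq_smul_one_add_smul_of_commute_of_apply_zero_one_ne_zero
    {g a : Matrix (Fin 2) (Fin 2) K} (hg : g 0 1 ≠ 0) (ha : Commute a g) :
    ∃ α β : K, a = α • 1 + β • g := by
  have h00 := congrFun₂ ha.eq 0 0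
  have h01 := congrFun₂ ha.eq 0 1
  simp only [mul_apply, Fin.sum_univ_two] at h00 h01
  refine ⟨a 0 0 - a 0 1 / g 0 1 * g 0 0, a 0 1 / g 0 1, ?_⟩
  ext i j
  fin_cases i <;> fin_cases j <;>
    simp only [add_apply, smul_apply, smul_eq_mul, one_apply_eq, one_apply_ne, ne_eq, zero_ne_one,
      one_ne_zero, not_false_eq_true, mul_one, mul_zero, zero_add, sub_add_cancel, Fin.isValue,
      Fin.zero_eta, Fin.mk_one]
  · field_simp
  · field_simp
    linear_combination -h00
  · field_simp
    linear_combination -h01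

theorem exists_eq_smul_one_add_smul_of_commute {g a : Matrix (Fin 2) (Fin 2) K}
    (hg : ¬∃ c : K, g = c • 1) (ha : Commute a g) : ∃ α β : K, a = α • 1 + β • g := by
  by_cases h01 : g 0 1 ≠ 0
  · exact exists_eq_smul_one_add_smul_of_commute_of_apply_zero_one_ne_zero h01 ha
  by_cases h10 : g 1 0 ≠ 0
  · have haT : Commute aᵀ gᵀ := by simp only [Commute, SemiconjBy, ← transpose_mul, ha.eq]
    obtain ⟨α, β, hT⟩ :=
      exists_eq_smul_one_add_smul_of_commute_of_apply_zero_one_ne_zero (g := gᵀ) h10 haT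
    exact ⟨α, β, by simpa using congrArg transpose hT⟩
  push Not at h01 h10
  have hd : g 0 0 - g 1 1 ≠ 0 := by
    refine sub_ne_zero.2 fun h ↦ hg ⟨g 0 0, ?_⟩
    ext i j
    fin_cases i <;> fin_cases j <;> simp [h, h01, h10]
  have e01 := congrFun₂ ha.eq 0 1
  have e10 := congrFun₂ ha.eq 1 0
  simp only [mul_apply, Fin.sum_univ_two, h01, h10, mul_zero, zero_mul, add_zero, zero_add]
    at e01 e10
  set β := (a 0 0 - a 1 1) / (g 0 0 - g 1 1)
  refine ⟨a 0 0 - β * g 0 0, β, ?_⟩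
  ext i j
  fin_cases i <;> fin_cases j <;>
    simp only [add_apply, smul_apply, smul_eq_mul, one_apply_eq, one_apply_ne, ne_eq, zero_ne_one,
      one_ne_zero, not_false_eq_true, mul_one, mul_zero, add_zero, sub_add_cancel, Fin.isValue,
      Fin.zero_eta, Fin.mk_one, h01, h10]
  · exact mul_left_cancel₀ hd (by linear_combination -e01)
  · exact mul_left_cancel₀ hd (by linear_combination e10)
  · linear_combination div_mul_cancel₀ (a 0 0 - a 1 1) hd

theorem commute_of_commute_of_not_scalar {g a b : Matrix (Fin 2) (Fin 2) K}
    (hg : ¬∃ c : K, g = c • 1) (ha : Commute a g) (hb : Commute b g) : Commute a b := by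
  obtain ⟨α, β, rfl⟩ := exists_eq_smul_one_add_smul_of_commute hg ha
  obtain ⟨γ, δ, rfl⟩ := exists_eq_smul_one_add_smul_of_commute hg hb
  refine .add_left (.add_right ?_ ?_) (.add_right ?_ ?_) <;> refine .smul_left (.smul_right ?_ _) _
  exacts [.refl 1, .one_left g, .one_right g, .refl g]

variable [StarRing K]

theorem isMulCommutative_centralizer_of_not_scalar {x : unitaryGroup (Fin 2) K}
    (hx : ¬∃ c : K, (x : Matrix (Fin 2) (Fin 2) K) = c • 1) :
    IsMulCommutative (Subgroup.centralizer {x}) := by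
  refine .of_setLike_mul_comm fun a ha b hb ↦ Subtype.ext ?_
  have hax := congrArg Subtype.val (Subgroup.mem_centralizer_singleton_iff.1 ha)
  have hbx := congrArg Subtype.val (Subgroup.mem_centralizer_singleton_iff.1 hb)
  exact commute_of_commute_of_not_scalar hx hax hbx

end Matrix

theorem MaxAbelianIn.maximal {H G : Subgroup (Matrix.unitaryGroup (Fin 2) ℂ)}
    (hH : MaxAbelianIn H G) : Maximal (fun K ↦ K ≤ G ∧ IsMulCommutative K) H :=
  ⟨⟨hH.1, hH.2.1⟩, fun K hK hHK ↦ (hH.2.2 K hK.1 hK.2 hHK).le⟩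

theorem maxAbelian_inter_eq_scalars_general
    (G : Subgroup (Matrix.unitaryGroup (Fin 2) ℂ))
    (Z : Set (Matrix.unitaryGroup (Fin 2) ℂ))
    (hZ : Z = {g | g ∈ G ∧ ∃ c : ℂ,
      (g : Matrix (Fin 2) (Fin 2) ℂ) = c • (1 : Matrix (Fin 2) (Fin 2) ℂ)}) :
    (∀ H, MaxAbelianIn H G → Z ⊆ (H : Set (Matrix.unitaryGroup (Fin 2) ℂ))) ∧
    (∀ H₁ H₂, MaxAbelianIn H₁ G → MaxAbelianIn H₂ G → H₁ ≠ H₂ →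
      (H₁ : Set (Matrix.unitaryGroup (Fin 2) ℂ)) ∩ H₂ = Z) := by
  have scalars_le : ∀ H, MaxAbelianIn H G → Z ⊆ (H : Set (Matrix.unitaryGroup (Fin 2) ℂ)) := by
    intro H hH z hz
    obtain ⟨hzG, c, hzc⟩ := hZ ▸ hz
    exact hH.maximal.mem_of_forall_commute hzG fun _ _ ↦ commute_of_coe_eq_smul_one hzc
  refine ⟨scalars_le, fun H₁ H₂ h₁ h₂ hne ↦ ?_⟩
  refine subset_antisymm (fun x ⟨hx₁, hx₂⟩ ↦ hZ ▸ ⟨h₁.1 hx₁, ?_⟩)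
    fun z hz ↦ ⟨scalars_le H₁ h₁ hz, scalars_le H₂ h₂ hz⟩
  by_contra hx
  exact hne (h₁.maximal.eq_of_mem_of_isMulCommutative_centralizer h₂.maximal hx₁ hx₂
    (isMulCommutative_centralizer_of_not_scalar hx))

/-- Let `G` be a finite subgroup of U(2) and `Z = G ∩ {scalar matrices}`.  Then `Z` is
contained in every maximal abelian subgroup of `G`, and any two distinct maximal abelian
subgroups of `G` intersect exactly in `Z`. -/
theorem maxAbelian_inter_eq_scalars
    (G : Subgroup (Matrix.unitaryGroup (Fin 2) ℂ)) (hG : Finite G)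
    (Z : Set (Matrix.unitaryGroup (Fin 2) ℂ))
    (hZ : Z = {g | g ∈ G ∧ ∃ c : ℂ,
      (g : Matrix (Fin 2) (Fin 2) ℂ) = c • (1 : Matrix (Fin 2) (Fin 2) ℂ)}) :
    (∀ H, MaxAbelianIn H G → Z ⊆ (H : Set (Matrix.unitaryGroup (Fin 2) ℂ))) ∧
    (∀ H₁ H₂, MaxAbelianIn H₁ G → MaxAbelianIn H₂ G → H₁ ≠ H₂ →
      (H₁ : Set (Matrix.unitaryGroup (Fin 2) ℂ)) ∩ H₂ = Z) :=
  maxAbelian_inter_eq_scalars_general G Z hZ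
end

section
/- Let G be a finite subgroup of U(2) and let H be a maximal abelian subgroup of G. Then the index of H in its normalizer N_G(H) is 1 or 2; equivalently, the group W = N_G(H)/H has order 1 or 2. -/
/-!
A non-scalar unitary `h₀ ∈ H` has two distinct eigenvalues (a normal matrix with a repeated
eigenvalue is scalar), so its centralizer in `M₂(ℂ)` is the commutative algebra spanned by `1`
and `h₀`. By maximality, `H` is therefore exactly the set of elements of `G` commuting with `h₀`.
An element of `N_G(H)` conjugates `h₀` to an element of `H` with the same trace and determinant,
which is either `h₀` or `tr(h₀) • 1 - h₀` (the eigenvalues swapped). Elements of `N_G(H)` outside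
`H` are of the second kind, and the product of two of them fixes `h₀`, hence lies in `H`.
If `H` consists of scalars it is central, so it is its own normalizer in `G`.
-/

open Matrix

theorem Subgroup.relIndex_eq_one_or_two_of_mul_mem {G : Type*} [Group G] {H K : Subgroup G}
    (h : ∀ a ∈ K, ∀ b ∈ K, a ∉ H → b ∉ H → b * a ∈ H) :
    H.relIndex K = 1 ∨ H.relIndex K = 2 := by
  by_cases hKH : K ≤ H
  · exact Or.inl (relIndex_eq_one.mpr hKH)
  obtain ⟨a, haK, haH⟩ := SetLike.not_le_iff_exists.mp hKH
  refine Or.inr (relIndex_eq_two_iff_exists_notMem_and.mpr ⟨a, haK, haH, fun b hbK => ?_⟩)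
  by_cases hbH : b ∈ H
  · exact Or.inr hbH
  · exact Or.inl (h a haK b hbK haH hbH)

namespace Matrix

section Field

variable {K : Type*} [Field K]

theorem fin_two_exists_eq_smul_one_add_smul_of_commute {g h : Matrix (Fin 2) (Fin 2) K}
    (hh : ∀ c : K, h ≠ c • 1) (hgh : Commute g h) : ∃ α β : K, g = α • 1 + β • h := by
  have e00 := congrFun (congrFun hgh.eq 0) 0
  have e01 := congrFun (congrFun hgh.eq 0) 1
  have e10 := congrFun (congrFun hgh.eq 1) 0
  simp only [mul_apply, Fin.sum_univ_two] at e00 e01 e10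
  have hne : h 0 1 ≠ 0 ∨ h 1 0 ≠ 0 ∨ h 0 0 - h 1 1 ≠ 0 := by
    by_contra! hs
    exact hh (h 0 0) <| by
      ext i j; fin_cases i <;> fin_cases j <;> simp [hs.1, hs.2.1, sub_eq_zero.mp hs.2.2]
  rcases hne with hb | hb | hb
  · refine ⟨g 0 0 - g 0 1 / h 0 1 * h 0 0, g 0 1 / h 0 1, ?_⟩
    ext i j; fin_cases i <;> fin_cases j <;> simp <;> field_simp
    · linear_combination -e00
    · linear_combination -e01
  · refine ⟨g 0 0 - g 1 0 / h 1 0 * h 0 0, g 1 0 / h 1 0, ?_⟩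
    ext i j; fin_cases i <;> fin_cases j <;> simp <;> field_simp
    · linear_combination e00
    · linear_combination e10
  · refine ⟨g 0 0 - (g 0 0 - g 1 1) / (h 0 0 - h 1 1) * h 0 0,
      (g 0 0 - g 1 1) / (h 0 0 - h 1 1), ?_⟩
    ext i j; fin_cases i <;> fin_cases j <;> simp <;> field_simp
    · linear_combination -e01
    · linear_combination e10
    · ring

theorem fin_two_commute_of_commute_of_commute {g₁ g₂ h : Matrix (Fin 2) (Fin 2) K}
    (hh : ∀ c : K, h ≠ c • 1) (h₁ : Commute g₁ h) (h₂ : Commute g₂ h) : Commute g₁ g₂ := by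
  obtain ⟨α, β, rfl⟩ := fin_two_exists_eq_smul_one_add_smul_of_commute hh h₂
  exact ((Commute.one_right g₁).smul_right α).add_right (h₁.smul_right β)

theorem fin_two_ne_smul_one_of_discr_ne_zero {h : Matrix (Fin 2) (Fin 2) K}
    (hdiscr : h.discr ≠ 0) (c : K) : h ≠ c • 1 := by
  rintro rfl
  apply hdiscr
  simp [discr_fin_two]
  ring

theorem fin_two_eq_or_eq_trace_smul_one_sub_of_commute {g h : Matrix (Fin 2) (Fin 2) K}
    (h2 : (2 : K) ≠ 0) (hdiscr : h.discr ≠ 0) (hgh : Commute g h)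
    (htrace : g.trace = h.trace) (hdet : g.det = h.det) : g = h ∨ g = h.trace • 1 - h := by
  obtain ⟨α, β, rfl⟩ := fin_two_exists_eq_smul_one_add_smul_of_commute
    (fin_two_ne_smul_one_of_discr_ne_zero hdiscr) hgh
  rw [discr_fin_two] at hdiscr
  have htrace' : α * 2 + β * h.trace = h.trace := by
    simpa [trace_add, trace_smul] using htrace
  have hdet' : α ^ 2 + α * β * h.trace + β ^ 2 * h.det = h.det := by
    simp only [det_fin_two, trace_fin_two, add_apply, smul_apply, one_apply_eq,
      one_apply_ne zero_ne_one, one_apply_ne one_ne_zero, smul_eq_mul] at hdet ⊢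
    linear_combination hdet
  have hβ : (β - 1) * (β + 1) = 0 := by
    refine (mul_eq_zero.mp ?_).resolve_right hdiscr
    linear_combination (β * h.trace + α * 2 + h.trace) * htrace' - 4 * hdet'
  rcases mul_eq_zero.mp hβ with hβ | hβ
  · left
    obtain rfl : β = 1 := by linear_combination hβ
    obtain rfl : α = 0 := by
      refine (mul_eq_zero.mp ?_).resolve_left h2
      linear_combination htrace'
    simp
  · right
    obtain rfl : β = -1 := by linear_combination hβ
    obtain rfl : α = h.trace := by
      refine mul_left_cancel₀ h2 ?_
      linear_combination htrace'
    module

end Field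

theorem fin_two_sq_two_smul_sub_trace_smul {R : Type*} [CommRing R]
    (h : Matrix (Fin 2) (Fin 2) R) : ((2 : R) • h - h.trace • 1) ^ 2 = h.discr • 1 := by
  rw [discr_fin_two, sq]
  ext i j; fin_cases i <;> fin_cases j <;> simp [mul_apply, trace_fin_two, det_fin_two] <;> ring

theorem eq_zero_of_mul_self_eq_zero_of_commute_conjTranspose {n R : Type*} [Fintype n]
    [CommRing R] [PartialOrder R] [StarRing R] [StarOrderedRing R] [NoZeroDivisors R]
    {N : Matrix n n R} (hN : N * N = 0) (hnormal : Commute N Nᴴ) : N = 0 := by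
  have hP : (Nᴴ * N)ᴴ * (Nᴴ * N) = 0 :=
    calc (Nᴴ * N)ᴴ * (Nᴴ * N) = Nᴴ * (N * Nᴴ) * N := by
          rw [conjTranspose_mul, conjTranspose_conjTranspose]; noncomm_ring
      _ = Nᴴ * Nᴴ * (N * N) := by rw [hnormal.eq]; noncomm_ring
      _ = 0 := by rw [hN, mul_zero]
  exact conjTranspose_mul_self_eq_zero.mp (conjTranspose_mul_self_eq_zero.mp hP)

open scoped ComplexOrder in
theorem fin_two_discr_ne_zero_of_commute_conjTranspose {h : Matrix (Fin 2) (Fin 2) ℂ}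
    (hh : ∀ c : ℂ, h ≠ c • 1) (hnormal : Commute h hᴴ) : h.discr ≠ 0 := by
  intro hdiscr
  set N := (2 : ℂ) • h - h.trace • 1
  have hN : N * N = 0 := by
    rw [← sq, fin_two_sq_two_smul_sub_trace_smul, hdiscr, zero_smul]
  have hNnormal : Commute N Nᴴ := by
    simp only [N, conjTranspose_sub, conjTranspose_smul, conjTranspose_one]
    exact ((hnormal.smul_left _).smul_right _).sub_right ((Commute.one_right _).smul_right _)
      |>.sub_left ((Commute.one_left _).smul_left _)
  have hN0 : (2 : ℂ) • h = h.trace • 1 :=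
    sub_eq_zero.mp (eq_zero_of_mul_self_eq_zero_of_commute_conjTranspose hN hNnormal)
  apply hh (h.trace / 2)
  rw [div_eq_inv_mul, mul_smul, ← hN0, smul_smul]
  norm_num

end Matrix

local notation "U₂" => Matrix.unitaryGroup (Fin 2) ℂ

local notation "M₂" => Matrix (Fin 2) (Fin 2) ℂ

namespace Matrix.UnitaryGroup

theorem conj_val (x h : U₂) :
    ((x * h * x⁻¹ : U₂) : M₂) = x * h * star (x : M₂) :=
  rfl

theorem conj_eq_or_eq_trace_smul_one_sub_of_mem_normalizer {H : Subgroup U₂}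
    [IsMulCommutative H] {h₀ x : U₂} (h₀H : h₀ ∈ H) (hh₀ : ∀ c : ℂ, (h₀ : M₂) ≠ c • 1)
    (hx : x ∈ Subgroup.normalizer (H : Set U₂)) :
    ((x * h₀ * x⁻¹ : U₂) : M₂) = h₀ ∨ ((x * h₀ * x⁻¹ : U₂) : M₂) = (h₀ : M₂).trace • 1 - h₀ := by
  have hconj : x * h₀ * x⁻¹ ∈ H := (Subgroup.mem_normalizer_iff.mp hx h₀).mp h₀H
  have hdiscr := fin_two_discr_ne_zero_of_commute_conjTranspose hh₀
    (commute_unitary_self_star h₀.2)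
  refine fin_two_eq_or_eq_trace_smul_one_sub_of_commute two_ne_zero hdiscr
    (congrArg Subtype.val (setLike_mul_comm hconj h₀H)) ?_ ?_
  · rw [conj_val, trace_mul_comm, ← mul_assoc, star_mul_self, one_mul]
  · rw [conj_val, det_mul, det_mul, mul_right_comm, ← det_mul,
      Unitary.mul_star_self_of_mem x.2, det_one, one_mul]

end Matrix.UnitaryGroup

namespace MaxAbelianIn

variable {G H : Subgroup U₂}

theorem mem_of_forall_commute (hH : MaxAbelianIn H G) {x : U₂} (hxG : x ∈ G)
    (hx : ∀ a ∈ H, Commute a x) : x ∈ H := by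
  have := hH.2.1
  set J := Subgroup.closure (insert x (H : Set U₂))
  have hJ : IsMulCommutative J := by
    refine Subgroup.isMulCommutative_closure ?_
    rintro a (rfl | ha) b (rfl | hb)
    · rfl
    · exact (hx b hb).eq.symm
    · exact (hx a ha).eq
    · exact setLike_mul_comm ha hb
  have hJG : J ≤ G := (Subgroup.closure_le G).mpr (Set.insert_subset hxG hH.1)
  have hHJ : H ≤ J := fun a ha => Subgroup.subset_closure (Set.mem_insert_of_mem x ha)
  rw [← hH.2.2 J hJG hJ hHJ]
  exact Subgroup.subset_closure (Set.mem_insert x _)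

theorem mem_of_commute_of_ne_smul_one (hH : MaxAbelianIn H G) {h₀ x : U₂} (h₀H : h₀ ∈ H)
    (hh₀ : ∀ c : ℂ, (h₀ : M₂) ≠ c • 1) (hxG : x ∈ G) (hx : Commute (x : M₂) h₀) : x ∈ H := by
  have := hH.2.1
  refine hH.mem_of_forall_commute hxG fun a ha => Subtype.ext ?_
  exact fin_two_commute_of_commute_of_commute hh₀
    (congrArg Subtype.val (setLike_mul_comm ha h₀H)) hx

end MaxAbelianIn

theorem maxAbelian_normalizer_index_general
    (G H : Subgroup (Matrix.unitaryGroup (Fin 2) ℂ))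
    (hH : MaxAbelianIn H G) :
    H.relIndex (Subgroup.normalizer (H : Set (Matrix.unitaryGroup (Fin 2) ℂ)) ⊓ G) = 1 ∨ H.relIndex (Subgroup.normalizer (H : Set (Matrix.unitaryGroup (Fin 2) ℂ)) ⊓ G) = 2 := by
  have := hH.2.1
  by_cases hscalar : ∀ a ∈ H, ∃ c : ℂ, (a : M₂) = c • 1
  · refine Or.inl (Subgroup.relIndex_eq_one.mpr fun x hx => ?_)
    refine hH.mem_of_forall_commute hx.2 fun a ha => Subtype.ext ?_
    obtain ⟨c, hc⟩ := hscalar a ha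
    simp [hc]
  push Not at hscalar
  obtain ⟨h₀, h₀H, hh₀⟩ := hscalar
  set t := (h₀ : M₂).trace
  have hswap : ∀ x ∈ Subgroup.normalizer (H : Set U₂) ⊓ G, x ∉ H →
      ((x * h₀ * x⁻¹ : U₂) : M₂) = t • 1 - h₀ := fun x hx hxH =>
    (UnitaryGroup.conj_eq_or_eq_trace_smul_one_sub_of_mem_normalizer h₀H hh₀ hx.1).resolve_left
      fun hfix => hxH <| hH.mem_of_commute_of_ne_smul_one h₀H hh₀ hx.2
        ((commute_unitary_iff_star_right_conjugate x.2).mpr hfix)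
  refine Subgroup.relIndex_eq_one_or_two_of_mul_mem fun a ha b hb haH hbH => ?_
  refine hH.mem_of_commute_of_ne_smul_one h₀H hh₀ (G.mul_mem hb.2 ha.2)
    ((commute_unitary_iff_star_right_conjugate (b * a).2).mpr ?_)
  calc ((b * a : U₂) : M₂) * h₀ * star ((b * a : U₂) : M₂)
      = b * ((a * h₀ * a⁻¹ : U₂) : M₂) * star (b : M₂) := by simp [star_mul, mul_assoc]
    _ = t • 1 - ((b * h₀ * b⁻¹ : U₂) : M₂) := by
        rw [hswap a ha haH, mul_sub, sub_mul, mul_smul_comm, mul_one, smul_mul_assoc,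
          Unitary.mul_star_self_of_mem b.2, UnitaryGroup.conj_val]
    _ = h₀ := by rw [hswap b hb hbH, sub_sub_cancel]

/-- If `G` is a finite subgroup of U(2) and `H` a maximal abelian subgroup of `G`,
then the index of `H` in its normalizer `N_G(H) = N(H) ⊓ G` is 1 or 2. -/
theorem maxAbelian_normalizer_index
    (G H : Subgroup (Matrix.unitaryGroup (Fin 2) ℂ)) (hG : Finite G)
    (hH : MaxAbelianIn H G) :
    H.relIndex (Subgroup.normalizer (H : Set (Matrix.unitaryGroup (Fin 2) ℂ)) ⊓ G) = 1 ∨ H.relIndex (Subgroup.normalizer (H : Set (Matrix.unitaryGroup (Fin 2) ℂ)) ⊓ G) = 2 :=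
  maxAbelian_normalizer_index_general G H hH
end

section
/- Let g ∈ U(2) with g ≠ 1, acting on S = ℂ[X,Y] by (g·f)(v) = f(g⁻¹v). Let 𝔓 be a nonzero homogeneous prime ideal of S with 𝔓 ≠ (X,Y), and suppose that g·f − f ∈ 𝔓 for every f ∈ S. Then there is a nonzero linear form a ∈ ℂX + ℂY such that 𝔓 = Sa is the principal ideal generated by a, and g fixes the line P = {v ∈ ℂ² : a(v) = 0} pointwise. -/
open Matrix MvPolynomial

/-- The action of a unitary matrix `g` on polynomial functions on ℂ²:
`(g · f)(v) = f(g⁻¹ v)`. -/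
noncomputable def actU2 (g : Matrix.unitaryGroup (Fin 2) ℂ) :
    MvPolynomial (Fin 2) ℂ →ₐ[ℂ] MvPolynomial (Fin 2) ℂ :=
  MvPolynomial.aeval fun i =>
    ∑ j : Fin 2, MvPolynomial.C
      (((g⁻¹ : Matrix.unitaryGroup (Fin 2) ℂ) : Matrix (Fin 2) (Fin 2) ℂ) i j) *
        MvPolynomial.X j

/-! Since `g ≠ 1`, some `g·Xᵢ - Xᵢ` is a nonzero linear form `a ∈ 𝔓`. In two variables every
variable is, modulo `a`, a scalar multiple `w_j X_k` of a single one, so a homogeneous `f` of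
degree `n` is congruent to `f(w) X_kⁿ` modulo `a`. If `f ∈ 𝔓`, then `f(w) X_kⁿ ∈ 𝔓`; and
`X_k ∉ 𝔓`, for otherwise `𝔓` would contain, hence (being homogeneous and proper) equal, the
irrelevant ideal. By primality `f(w) = 0`, so `f ∈ (a)` and `𝔓 = (a)`. Finally, if `a(v) = 0`
then `f(g⁻¹v) = f(v)` for every `f`, so `g⁻¹v = v`. -/

namespace MvPolynomial

theorem aeval_sub_mem_of_forall_X_sub_mem {σ R : Type*} [CommRing R]
    {I : Ideal (MvPolynomial σ R)} {F : σ → MvPolynomial σ R} (hF : ∀ j, F j - X j ∈ I)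
    (f : MvPolynomial σ R) : aeval F f - f ∈ I := by
  have hmk : (Ideal.Quotient.mkₐ R I).comp (aeval F) = Ideal.Quotient.mkₐ R I :=
    algHom_ext fun j => by simpa [Ideal.Quotient.eq] using hF j
  simpa [Ideal.Quotient.eq] using congr($hmk f)

section CommSemiring

variable {σ R : Type*} [CommSemiring R]

theorem IsHomogeneous.aeval_C_mul {f : MvPolynomial σ R} {n : ℕ} (hf : f.IsHomogeneous n)
    (w : σ → R) (p : MvPolynomial σ R) :
    MvPolynomial.aeval (fun j => C (w j) * p) f = C (eval w f) * p ^ n := by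
  classical
  conv_lhs => rw [f.as_sum]
  conv_rhs => rw [f.as_sum]
  simp only [map_sum, Finset.sum_mul]
  refine Finset.sum_congr rfl fun d hdf => ?_
  have hd : d.degree = n := by
    rw [Finsupp.degree_eq_weight_one]
    exact hf (mem_support_iff.mp hdf)
  rw [aeval_monomial, eval_monomial]
  simp only [Finsupp.prod, mul_pow, Finset.prod_mul_distrib]
  rw [Finset.prod_pow_eq_pow_sum, ← Finsupp.degree_apply, hd, algebraMap_eq,
    MvPolynomial.C_mul, map_prod]
  simp only [map_pow, mul_assoc]

theorem idealOfVars_fin_two : idealOfVars (Fin 2) R = Ideal.span {X 0, X 1} := by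
  rw [idealOfVars]
  congr 1
  ext p
  simp [Fin.exists_fin_two, eq_comm]

noncomputable def linearForm [Fintype σ] (c : σ → R) : MvPolynomial σ R :=
  ∑ j, C (c j) * X j

variable [Fintype σ]

theorem eval_linearForm (c v : σ → R) : eval v (linearForm c) = c ⬝ᵥ v := by
  simp [linearForm, dotProduct]

theorem isHomogeneous_linearForm (c : σ → R) : (linearForm c).IsHomogeneous 1 :=
  IsHomogeneous.sum _ _ _ fun j _ => isHomogeneous_C_mul_X (c j) j

theorem linearForm_ne_zero [DecidableEq σ] {c : σ → R} (hc : c ≠ 0) : linearForm c ≠ 0 := by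
  refine fun h => hc (_root_.funext fun k => ?_)
  simpa [eval_linearForm] using congr(eval (Pi.single k 1) $h)

end CommSemiring

variable {σ K : Type*} [Field K]

theorem le_idealOfVars_of_homogeneousComponent_zero_mem {I : Ideal (MvPolynomial σ K)}
    (hI : I ≠ ⊤) (h0 : ∀ f ∈ I, homogeneousComponent 0 f ∈ I) : I ≤ idealOfVars σ K := by
  intro f hf
  have hC : C (coeff 0 f) ∈ I := homogeneousComponent_zero f ▸ h0 f hf
  have hcoeff : coeff 0 f = 0 := by
    by_contra hne
    exact hI (Ideal.eq_top_of_isUnit_mem _ hC ((Ne.isUnit hne).map C))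
  rw [← pow_one (idealOfVars σ K), mem_pow_idealOfVars_iff']
  intro d hd
  rwa [(Finsupp.degree_eq_zero_iff d).1 (Nat.lt_one_iff.1 hd)]

theorem _root_.Ideal.IsPrime.eq_span_singleton_of_forall_C_mul_X_sub_X_mem
    {𝔓 : Ideal (MvPolynomial σ K)} (h𝔓 : 𝔓.IsPrime) (hirr : 𝔓 ≠ idealOfVars σ K)
    (hhom : ∀ f ∈ 𝔓, ∀ n, homogeneousComponent n f ∈ 𝔓) {a : MvPolynomial σ K} (ha : a ∈ 𝔓)
    {k : σ} {w : σ → K} (hw : ∀ j, C (w j) * X k - X j ∈ Ideal.span {a}) :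
    𝔓 = Ideal.span {a} := by
  have hle : Ideal.span {a} ≤ 𝔓 := (Ideal.span_singleton_le_iff_mem _).2 ha
  have hXk : X k ∉ 𝔓 := by
    intro hk
    refine hirr (le_antisymm (le_idealOfVars_of_homogeneousComponent_zero_mem h𝔓.ne_top
      fun f hf => hhom f hf 0) (Ideal.span_le.2 ?_))
    rintro _ ⟨j, rfl⟩
    simpa using 𝔓.sub_mem (𝔓.mul_mem_left (C (w j)) hk) (hle (hw j))
  have hmem_of_isHomogeneous {f : MvPolynomial σ K} {n : ℕ} (hf : f ∈ 𝔓)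
      (hfn : f.IsHomogeneous n) : f ∈ Ideal.span {a} := by
    have hsub := aeval_sub_mem_of_forall_X_sub_mem hw f
    rw [hfn.aeval_C_mul] at hsub
    have hCX : C (eval w f) * X k ^ n ∈ 𝔓 := by simpa using 𝔓.add_mem (hle hsub) hf
    have hc : eval w f = 0 := by
      rcases h𝔓.mem_or_mem hCX with hC | hX
      · by_contra hne
        exact h𝔓.ne_top (Ideal.eq_top_of_isUnit_mem _ hC ((Ne.isUnit hne).map C))
      · exact absurd (h𝔓.mem_of_pow_mem n hX) hXk
    simpa [hc] using hsub
  refine le_antisymm (fun f hf => ?_) hle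
  rw [← sum_homogeneousComponent f]
  exact Ideal.sum_mem _ fun n _ =>
    hmem_of_isHomogeneous (hhom f hf n) (homogeneousComponent_isHomogeneous n f)

theorem exists_forall_C_mul_X_sub_X_mem_span_linearForm {c : Fin 2 → K} (hc : c ≠ 0) :
    ∃ (k : Fin 2) (w : Fin 2 → K), ∀ j, C (w j) * X k - X j ∈ Ideal.span {linearForm c} := by
  simp only [Ideal.mem_span_singleton', linearForm, Fin.sum_univ_two, Fin.forall_fin_two]
  by_cases hc1 : c 1 = 0
  · have hc0 : c 0 ≠ 0 := fun hc0 => hc (_root_.funext (Fin.forall_fin_two.2 ⟨hc0, hc1⟩))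
    have hC : C (c 0)⁻¹ * C (c 0) = (1 : MvPolynomial (Fin 2) K) := by
      rw [← map_mul, inv_mul_cancel₀ hc0, map_one]
    refine ⟨1, ![0, 1], ⟨-C (c 0)⁻¹, ?_⟩, ⟨0, by simp⟩⟩
    simp only [hc1, map_zero, zero_mul, add_zero, Matrix.cons_val_zero]
    linear_combination (-X 0) * hC
  · have hC : C (c 1)⁻¹ * C (c 1) = (1 : MvPolynomial (Fin 2) K) := by
      rw [← map_mul, inv_mul_cancel₀ hc1, map_one]
    refine ⟨0, ![1, -(c 0 / c 1)], ⟨0, by simp⟩, ⟨-C (c 1)⁻¹, ?_⟩⟩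
    simp only [Matrix.cons_val_one, Matrix.cons_val_zero, div_eq_inv_mul, map_neg, map_mul]
    linear_combination (-X 1) * hC

end MvPolynomial

section actU2

variable (g : unitaryGroup (Fin 2) ℂ)

theorem actU2_eq_aeval_linearForm :
    actU2 g = aeval fun i => linearForm ((↑g⁻¹ : Matrix (Fin 2) (Fin 2) ℂ) i) :=
  rfl

theorem eval_actU2 (v : Fin 2 → ℂ) (f : MvPolynomial (Fin 2) ℂ) :
    eval v (actU2 g f) = eval ((↑g⁻¹ : Matrix (Fin 2) (Fin 2) ℂ) *ᵥ v) f := by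
  have hC : (eval v).comp (algebraMap ℂ (MvPolynomial (Fin 2) ℂ)) = RingHom.id ℂ :=
    RingHom.ext (eval_C (f := v))
  rw [actU2_eq_aeval_linearForm, aeval_def, eval_eval₂, hC, eval₂_id]
  simp only [eval_linearForm]
  rfl

theorem actU2_X_sub_X (i : Fin 2) :
    actU2 g (X i) - X i = linearForm (((↑g⁻¹ : Matrix (Fin 2) (Fin 2) ℂ) - 1) i) := by
  simp [actU2_eq_aeval_linearForm, linearForm, Matrix.sub_apply, Matrix.one_apply, sub_mul]

theorem exists_row_inv_sub_one_ne_zero (hg : g ≠ 1) :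
    ∃ i, ((↑g⁻¹ : Matrix (Fin 2) (Fin 2) ℂ) - 1) i ≠ 0 := by
  by_contra! h
  exact hg (inv_eq_one.1 (Subtype.ext (sub_eq_zero.1 (funext h))))

theorem mulVec_eq_self_of_forall_actU2_sub_mem_span {a : MvPolynomial (Fin 2) ℂ}
    (hfix : ∀ f, actU2 g f - f ∈ Ideal.span {a}) {v : Fin 2 → ℂ} (hv : eval v a = 0) :
    (g : Matrix (Fin 2) (Fin 2) ℂ) *ᵥ v = v := by
  have hinv : (↑g⁻¹ : Matrix (Fin 2) (Fin 2) ℂ) *ᵥ v = v := funext fun i => by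
    obtain ⟨b, hb⟩ := Ideal.mem_span_singleton'.1 (hfix (X i))
    simpa [eval_actU2, hv, sub_eq_zero] using congr(eval v $hb).symm
  conv_lhs => rw [← hinv]
  rw [mulVec_mulVec, ← Submonoid.coe_mul, mul_inv_cancel, Submonoid.coe_one, one_mulVec]

end actU2

theorem ramified_prime_is_line_general
    (g : Matrix.unitaryGroup (Fin 2) ℂ) (hg : g ≠ 1)
    (𝔓 : Ideal (MvPolynomial (Fin 2) ℂ)) (h𝔓 : 𝔓.IsPrime)
    (hirr : 𝔓 ≠ Ideal.span {MvPolynomial.X 0, MvPolynomial.X 1})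
    (hhom : ∀ f ∈ 𝔓, ∀ n : ℕ, MvPolynomial.homogeneousComponent n f ∈ 𝔓)
    (hfix : ∀ f : MvPolynomial (Fin 2) ℂ, actU2 g f - f ∈ 𝔓) :
    ∃ a : MvPolynomial (Fin 2) ℂ, a ≠ 0 ∧ a.IsHomogeneous 1 ∧
      𝔓 = Ideal.span {a} ∧
      ∀ v : Fin 2 → ℂ, MvPolynomial.eval v a = 0 →
        (g : Matrix (Fin 2) (Fin 2) ℂ).mulVec v = v := by
  obtain ⟨i, hi⟩ := exists_row_inv_sub_one_ne_zero g hg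
  obtain ⟨k, w, hw⟩ := exists_forall_C_mul_X_sub_X_mem_span_linearForm hi
  have ha : linearForm _ ∈ 𝔓 := actU2_X_sub_X g i ▸ hfix (X i)
  have h𝔓a := h𝔓.eq_span_singleton_of_forall_C_mul_X_sub_X_mem
    (idealOfVars_fin_two (R := ℂ) ▸ hirr) hhom ha hw
  exact ⟨_, linearForm_ne_zero hi, isHomogeneous_linearForm _, h𝔓a,
    fun v hv => mulVec_eq_self_of_forall_actU2_sub_mem_span g (h𝔓a ▸ hfix) hv⟩

/-- Let `g ∈ U(2)`, `g ≠ 1`, and let `𝔓` be a nonzero homogeneous prime ideal of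
`S = ℂ[X,Y]` different from the irrelevant ideal `(X,Y)`, such that `g·f − f ∈ 𝔓`
for all `f ∈ S`.  Then `𝔓 = S·a` for a nonzero linear form `a`, and `g` fixes the line
`{a = 0}` pointwise. -/
theorem ramified_prime_is_line
    (g : Matrix.unitaryGroup (Fin 2) ℂ) (hg : g ≠ 1)
    (𝔓 : Ideal (MvPolynomial (Fin 2) ℂ)) (h𝔓 : 𝔓.IsPrime)
    (hne : 𝔓 ≠ ⊥)
    (hirr : 𝔓 ≠ Ideal.span {MvPolynomial.X 0, MvPolynomial.X 1})
    (hhom : ∀ f ∈ 𝔓, ∀ n : ℕ, MvPolynomial.homogeneousComponent n f ∈ 𝔓)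
    (hfix : ∀ f : MvPolynomial (Fin 2) ℂ, actU2 g f - f ∈ 𝔓) :
    ∃ a : MvPolynomial (Fin 2) ℂ, a ≠ 0 ∧ a.IsHomogeneous 1 ∧
      𝔓 = Ideal.span {a} ∧
      ∀ v : Fin 2 → ℂ, MvPolynomial.eval v a = 0 →
        (g : Matrix (Fin 2) (Fin 2) ℂ).mulVec v = v :=
  ramified_prime_is_line_general g hg 𝔓 h𝔓 hirr hhom hfix
end

section
/- Let G be a finite subgroup of GL₂(ℂ), let a be a nonzero linear form on ℂ² and P = {v ∈ ℂ² : a(v) = 0}. Let H = {g ∈ G : gP = P}, and let g₁, …, g_m be a complete set of representatives of the right cosets H\G (so m = [G : H]). Define f_P(v) = ∏_{j=1}^m a(g_j v). Then there exists a group homomorphism μ : G → ℂ^× such that f_P(g v) = μ(g)·f_P(v) for all g ∈ G and all v ∈ ℂ²; that is, f_P is a relative invariant of G. -/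
open Matrix

-- auxiliary: two linear forms with comparable kernels are proportional
lemma forms_proportional {E : Type*} [AddCommGroup E] [Module ℂ E]
    (b c : E →ₗ[ℂ] ℂ) (h : LinearMap.ker c ≤ LinearMap.ker b) :
    ∃ s : ℂ, b = s • c := by
  have := mem_span_of_iInf_ker_le_ker (ι := Unit) (L := fun _ => c) (K := b)
    (by simpa using h)
  rw [Set.range_const, Submodule.mem_span_singleton] at this
  obtain ⟨s, hs⟩ := this
  exact ⟨s, hs.symm⟩

/-- Let `G` be a finite subgroup of GL₂(ℂ), `a` a nonzero linear form with zero line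
`P = ker a`, `H = {g ∈ G : gP = P}`, and `g₁,…,g_m` a complete set of representatives
of the right cosets `H\G`.  Then `f_P(v) = ∏ⱼ a(gⱼ v)` is a relative invariant of `G`:
there is a homomorphism `μ : G → ℂˣ` with `f_P(g v) = μ(g)·f_P(v)` for all `g ∈ G`, `v`. -/
theorem relative_invariant_of_line
    (G : Subgroup (Matrix.GeneralLinearGroup (Fin 2) ℂ)) (hG : Finite G)
    (a : (Fin 2 → ℂ) →ₗ[ℂ] ℂ) (ha : a ≠ 0)
    (P : Submodule ℂ (Fin 2 → ℂ)) (hP : P = LinearMap.ker a)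
    (H : Subgroup (Matrix.GeneralLinearGroup (Fin 2) ℂ))
    (hH : ∀ g, g ∈ H ↔ g ∈ G ∧
      Submodule.map (Matrix.mulVecLin (g : Matrix (Fin 2) (Fin 2) ℂ)) P = P)
    (m : ℕ) (reps : Fin m → Matrix.GeneralLinearGroup (Fin 2) ℂ)
    (hreps : ∀ j, reps j ∈ G)
    (hcosets : ∀ g ∈ G, ∃! j : Fin m, g * (reps j)⁻¹ ∈ H)
    (fP : (Fin 2 → ℂ) → ℂ)
    (hfP : ∀ v, fP v = ∏ j : Fin m, a ((reps j : Matrix (Fin 2) (Fin 2) ℂ).mulVec v)) :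
    ∃ μ : G →* ℂˣ, ∀ (g : G) (v : Fin 2 → ℂ),
      fP (((g : Matrix.GeneralLinearGroup (Fin 2) ℂ) : Matrix (Fin 2) (Fin 2) ℂ).mulVec v)
        = (μ g : ℂ) * fP v := by
  classical
  -- invertible matrices act injectively
  have hinj : ∀ (u : Matrix.GeneralLinearGroup (Fin 2) ℂ) (v w : Fin 2 → ℂ),
      (u : Matrix (Fin 2) (Fin 2) ℂ).mulVec v = (u : Matrix (Fin 2) (Fin 2) ℂ).mulVec w → v = w := by
    intro u v w huv
    have := congrArg (fun x => ((u⁻¹ : Matrix.GeneralLinearGroup (Fin 2) ℂ) : Matrix (Fin 2) (Fin 2) ℂ).mulVec x) huv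
    have hd : IsUnit (u : Matrix (Fin 2) (Fin 2) ℂ).det :=
      (Matrix.isUnit_iff_isUnit_det _).mp u.isUnit
    simp only [Matrix.mulVec_mulVec, ← Units.val_mul, inv_mul_cancel, Units.val_one, Matrix.one_mulVec] at this
    exact this
  -- for h ∈ H, a ∘ h = c • a with c a unit
  have hHscale : ∀ h ∈ H, ∃ c : ℂˣ, ∀ v, a ((h : Matrix (Fin 2) (Fin 2) ℂ).mulVec v) = c * a v := by
    intro h hh
    obtain ⟨-, hmap⟩ := (hH h).mp hh
    set b : (Fin 2 → ℂ) →ₗ[ℂ] ℂ := a ∘ₗ Matrix.mulVecLin (h : Matrix (Fin 2) (Fin 2) ℂ) with hb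
    have hker : LinearMap.ker a ≤ LinearMap.ker b := by
      intro v hv
      have hvP : v ∈ P := by rw [hP]; exact hv
      have : (h : Matrix (Fin 2) (Fin 2) ℂ).mulVec v ∈ P := by
        rw [← hmap]; exact ⟨v, hvP, rfl⟩
      rw [hP] at this
      simpa [hb, LinearMap.mem_ker] using this
    obtain ⟨s, hs⟩ := forms_proportional b a hker
    have hs0 : s ≠ 0 := by
      rintro rfl
      apply ha
      refine LinearMap.ext fun w => ?_
      have hw : a ((h : Matrix (Fin 2) (Fin 2) ℂ).mulVec
          (((h⁻¹ : Matrix.GeneralLinearGroup (Fin 2) ℂ) : Matrix (Fin 2) (Fin 2) ℂ).mulVec w)) = 0 := by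
        have := congrFun (congrArg (fun (f : (Fin 2 → ℂ) →ₗ[ℂ] ℂ) => (f : (Fin 2 → ℂ) → ℂ)) hs)
          (((h⁻¹ : Matrix.GeneralLinearGroup (Fin 2) ℂ) : Matrix (Fin 2) (Fin 2) ℂ).mulVec w)
        simpa [hb] using this
      have hcomp : (h : Matrix (Fin 2) (Fin 2) ℂ).mulVec
          (((h⁻¹ : Matrix.GeneralLinearGroup (Fin 2) ℂ) : Matrix (Fin 2) (Fin 2) ℂ).mulVec w) = w := by
        rw [Matrix.mulVec_mulVec, ← Units.val_mul, mul_inv_cancel]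
        simp
      rw [hcomp] at hw
      simpa using hw
    refine ⟨Units.mk0 s hs0, fun v => ?_⟩
    have := congrFun (congrArg (fun (f : (Fin 2 → ℂ) →ₗ[ℂ] ℂ) => (f : (Fin 2 → ℂ) → ℂ)) hs) v
    simpa [hb] using this
  -- 1 ∈ H
  have h1H : (1 : Matrix.GeneralLinearGroup (Fin 2) ℂ) ∈ H := one_mem H
  -- the scaling property for every g ∈ G
  have key : ∀ g ∈ G, ∃ c : ℂˣ, ∀ v,
      fP ((g : Matrix (Fin 2) (Fin 2) ℂ).mulVec v) = c * fP v := by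
    intro g hg
    -- the permutation of coset representatives induced by g
    have hexists : ∀ j : Fin m, ∃! k : Fin m, reps j * g * (reps k)⁻¹ ∈ H :=
      fun j => hcosets (reps j * g) (mul_mem (hreps j) hg)
    choose σ hσ hσuniq using hexists
    have hσinj : Function.Injective σ := by
      intro j j' hjj'
      have h1 : reps j * g * (reps (σ j'))⁻¹ ∈ H := hjj' ▸ hσ j
      have h2 : reps j' * g * (reps (σ j'))⁻¹ ∈ H := hσ j'
      have h3 : reps j * (reps j')⁻¹ ∈ H := by
        have := mul_mem h1 (inv_mem h2)
        simpa [mul_assoc] using this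
      have hu := hcosets (reps j) (hreps j)
      obtain ⟨k, -, huniq⟩ := hu
      have e1 : j = k := huniq j (by simpa using h1H)
      have e2 : j' = k := huniq j' h3
      rw [e1, e2]
    have hσbij : Function.Bijective σ := Finite.injective_iff_bijective.mp hσinj
    let e : Equiv.Perm (Fin m) := Equiv.ofBijective σ hσbij
    -- scaling factors
    choose c hc using fun j => hHscale _ (hσ j)
    refine ⟨∏ j, c j, fun v => ?_⟩
    rw [hfP, hfP]
    have step : ∀ j : Fin m, a ((reps j : Matrix (Fin 2) (Fin 2) ℂ).mulVec
        ((g : Matrix (Fin 2) (Fin 2) ℂ).mulVec v))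
        = c j * a ((reps (σ j) : Matrix (Fin 2) (Fin 2) ℂ).mulVec v) := by
      intro j
      have hdecomp : (reps j * g : Matrix.GeneralLinearGroup (Fin 2) ℂ)
          = (reps j * g * (reps (σ j))⁻¹) * reps (σ j) := by group
      calc a ((reps j : Matrix (Fin 2) (Fin 2) ℂ).mulVec
            ((g : Matrix (Fin 2) (Fin 2) ℂ).mulVec v))
          = a (((reps j * g : Matrix.GeneralLinearGroup (Fin 2) ℂ) :
              Matrix (Fin 2) (Fin 2) ℂ).mulVec v) := by
            rw [Matrix.mulVec_mulVec, Units.val_mul]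
        _ = a ((((reps j * g * (reps (σ j))⁻¹) : Matrix.GeneralLinearGroup (Fin 2) ℂ) :
              Matrix (Fin 2) (Fin 2) ℂ).mulVec
              ((reps (σ j) : Matrix (Fin 2) (Fin 2) ℂ).mulVec v)) := by
            rw [Matrix.mulVec_mulVec, ← Units.val_mul, ← hdecomp]
        _ = c j * a ((reps (σ j) : Matrix (Fin 2) (Fin 2) ℂ).mulVec v) := hc j _
    calc (∏ j : Fin m, a ((reps j : Matrix (Fin 2) (Fin 2) ℂ).mulVec
          ((g : Matrix (Fin 2) (Fin 2) ℂ).mulVec v)))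
        = ∏ j : Fin m, (c j : ℂ) * a ((reps (σ j) : Matrix (Fin 2) (Fin 2) ℂ).mulVec v) := by
          exact Finset.prod_congr rfl fun j _ => step j
      _ = (∏ j : Fin m, (c j : ℂ)) *
          ∏ j : Fin m, a ((reps (σ j) : Matrix (Fin 2) (Fin 2) ℂ).mulVec v) := by
          rw [Finset.prod_mul_distrib]
      _ = ((∏ j, c j : ℂˣ) : ℂ) * ∏ j : Fin m, a ((reps j : Matrix (Fin 2) (Fin 2) ℂ).mulVec v) := by
          rw [show ((∏ j, c j : ℂˣ) : ℂ) = ∏ j, (c j : ℂ) from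
            map_prod (Units.coeHom ℂ) c Finset.univ]
          congr 1
          exact Fintype.prod_bijective σ hσbij _ _ (fun _ => rfl)
  -- a vector where fP doesn't vanish
  have hv0 : ∃ v0 : Fin 2 → ℂ, fP v0 ≠ 0 := by
    have hforms : ∀ j : Fin m, (a ∘ₗ Matrix.mulVecLin (reps j : Matrix (Fin 2) (Fin 2) ℂ)) ≠ 0 := by
      intro j hzero
      apply ha
      refine LinearMap.ext fun w => ?_
      have hw := congrFun (congrArg (fun (f : (Fin 2 → ℂ) →ₗ[ℂ] ℂ) => (f : (Fin 2 → ℂ) → ℂ)) hzero)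
        ((((reps j)⁻¹ : Matrix.GeneralLinearGroup (Fin 2) ℂ) : Matrix (Fin 2) (Fin 2) ℂ).mulVec w)
      have hcomp : ((reps j) : Matrix (Fin 2) (Fin 2) ℂ).mulVec
          ((((reps j)⁻¹ : Matrix.GeneralLinearGroup (Fin 2) ℂ) : Matrix (Fin 2) (Fin 2) ℂ).mulVec w) = w := by
        rw [Matrix.mulVec_mulVec, ← Units.val_mul, mul_inv_cancel]
        simp
      have hw' := hw
      simp only [LinearMap.comp_apply, Matrix.mulVecLin_apply, LinearMap.zero_apply] at hw'
      rw [hcomp] at hw'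
      simpa using hw'
    set K : Fin m → Subspace ℂ (Fin 2 → ℂ) :=
      fun j => LinearMap.ker (a ∘ₗ Matrix.mulVecLin (reps j : Matrix (Fin 2) (Fin 2) ℂ)) with hK
    have htopK : ∀ j, K j ≠ ⊤ := by
      intro j htop
      apply hforms j
      refine LinearMap.ext fun w => ?_
      have : w ∈ K j := htop ▸ Submodule.mem_top
      simpa [hK, LinearMap.mem_ker] using this
    have hnmem : (⊤ : Subspace ℂ (Fin 2 → ℂ)) ∉ Finset.image K Finset.univ := by
      simp only [Finset.mem_image]
      rintro ⟨j, -, hj⟩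
      exact htopK j hj
    have hne := Subspace.biUnion_ne_univ_of_top_notMem hnmem
    rw [Set.ne_univ_iff_exists_notMem] at hne
    obtain ⟨v0, hv0⟩ := hne
    refine ⟨v0, ?_⟩
    rw [hfP]
    apply Finset.prod_ne_zero_iff.mpr
    intro j _ hj0
    apply hv0
    refine Set.mem_iUnion.mpr ⟨K j, Set.mem_iUnion.mpr
      ⟨Finset.mem_image_of_mem K (Finset.mem_univ j), ?_⟩⟩
    simpa [hK, LinearMap.mem_ker] using hj0
  obtain ⟨v0, hv00⟩ := hv0
  choose C hC using fun g : G => key g g.2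
  have hmul : ∀ g g' : G, C (g * g') = C g * C g' := by
    intro g g'
    have e1 : (C (g * g') : ℂ) * fP v0 = (C g : ℂ) * ((C g' : ℂ) * fP v0) := by
      rw [← hC g' v0, ← hC g ((((g' : Matrix.GeneralLinearGroup (Fin 2) ℂ)) :
        Matrix (Fin 2) (Fin 2) ℂ).mulVec v0), ← hC (g * g') v0]
      congr 1
      rw [Matrix.mulVec_mulVec]
      rfl
    have : (C (g * g') : ℂ) = (C g : ℂ) * (C g' : ℂ) := by
      rw [← mul_assoc] at e1
      exact mul_right_cancel₀ hv00 e1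
    exact Units.ext (by push_cast; exact this)
  refine ⟨MonoidHom.mk' C hmul, fun g v => hC g v⟩
end

section
/- Let G be a finite subgroup of GL₂(ℂ) and let f be a nonzero homogeneous polynomial on ℂ² of positive degree which is a relative invariant of G, i.e. f(gv) = χ(g)f(v) for all g ∈ G, v ∈ ℂ², for some homomorphism χ : G → ℂ^×. Then there exist finitely many one-dimensional subspaces P₁, …, P_r of ℂ² lying in pairwise distinct G-orbits (for the action of G on lines), positive integers m₁, …, m_r, and a constant c ∈ ℂ^× such that f = c·∏_{i=1}^r f_{P_i}^{m_i}, where for a line P = {a = 0} with stabilizer H = {g ∈ G : gP = P} one sets f_P(v) = ∏_j a(g_j v), the product over a complete set of representatives g_j of the cosets H\G. -/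
open Matrix MvPolynomial

noncomputable section RelInvAux

namespace RelInv

abbrev V2 := Fin 2 → ℂ
abbrev Form := V2 →ₗ[ℂ] ℂ

def e0 : V2 := ![1, 0]
def e1 : V2 := ![0, 1]

lemma vec_decomp (v : V2) : v = v 0 • e0 + v 1 • e1 := by
  funext i
  fin_cases i <;> simp [e0, e1]

lemma apply_eq (ℓ : Form) (v : V2) : ℓ v = v 0 * ℓ e0 + v 1 * ℓ e1 := by
  conv_lhs => rw [vec_decomp v]
  simp [smul_eq_mul]

lemma form_eq_zero_iff (ℓ : Form) : ℓ = 0 ↔ ℓ e0 = 0 ∧ ℓ e1 = 0 := by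
  constructor
  · rintro rfl; simp
  · rintro ⟨h0, h1⟩
    apply LinearMap.ext; intro v
    rw [apply_eq, h0, h1]; simp

/-- the slope invariant of a linear form: `none` is the line at infinity -/
def slope (ℓ : Form) : Option ℂ :=
  if ℓ e0 = 0 then none else some (-(ℓ e1) / ℓ e0)

def lineOf : Option ℂ → Submodule ℂ V2
  | none => Submodule.span ℂ {e0}
  | some r => Submodule.span ℂ {![r, 1]}

lemma vr_apply (r : ℂ) (ℓ : Form) : ℓ ![r, 1] = r * ℓ e0 + ℓ e1 := by
  rw [apply_eq]
  simp

lemma ker_eq_lineOf {ℓ : Form} (hℓ : ℓ ≠ 0) : LinearMap.ker ℓ = lineOf (slope ℓ) := by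
  rw [slope]
  split_ifs with h0
  · have h1 : ℓ e1 ≠ 0 := by
      intro h1; exact hℓ ((form_eq_zero_iff ℓ).2 ⟨h0, h1⟩)
    apply le_antisymm
    · intro v hv
      rw [LinearMap.mem_ker, apply_eq, h0, mul_zero, zero_add] at hv
      have hv1 : v 1 = 0 := by
        rcases mul_eq_zero.1 hv with h | h
        · exact h
        · exact absurd h h1
      simp only [lineOf, Submodule.mem_span_singleton]
      refine ⟨v 0, ?_⟩
      funext i
      fin_cases i
      · simp [e0]
      · simp [e0, hv1]
    · simp only [lineOf, Submodule.span_le, Set.singleton_subset_iff, SetLike.mem_coe,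
        LinearMap.mem_ker]
      rw [apply_eq, h0]
      have : e0 1 = 0 := by simp [e0]
      rw [this]
      ring
  · apply le_antisymm
    · intro v hv
      rw [LinearMap.mem_ker, apply_eq] at hv
      simp only [lineOf, Submodule.mem_span_singleton]
      refine ⟨v 1, ?_⟩
      have hv0 : v 1 * (-(ℓ e1) / ℓ e0) = v 0 := by
        field_simp
        linear_combination -hv
      funext i
      fin_cases i
      · simpa using hv0
      · simp
    · simp only [lineOf, Submodule.span_le, Set.singleton_subset_iff, SetLike.mem_coe,
        LinearMap.mem_ker]
      rw [vr_apply]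
      field_simp
      ring


/-- the associated one-variable polynomial of a linear form -/
def φpoly (ℓ : Form) : Polynomial ℂ := Polynomial.C (ℓ e0) * Polynomial.X + Polynomial.C (ℓ e1)

lemma eval_φpoly (ℓ : Form) (t : ℂ) : (φpoly ℓ).eval t = ℓ ![t, 1] := by
  rw [φpoly, vr_apply]; simp; ring

lemma φpoly_ne_zero {ℓ : Form} (hℓ : ℓ ≠ 0) : φpoly ℓ ≠ 0 := by
  intro h
  apply hℓ
  rw [form_eq_zero_iff]
  have h1 := congrArg (Polynomial.coeff · 1) h
  have h0 := congrArg (Polynomial.coeff · 0) h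
  simp [φpoly] at h1 h0
  exact ⟨h1, h0⟩

lemma φpoly_of_slope_none {ℓ : Form} (h0 : ℓ e0 = 0) : φpoly ℓ = Polynomial.C (ℓ e1) := by
  rw [φpoly, h0]; simp

lemma φpoly_of_slope_some {ℓ : Form} (h0 : ℓ e0 ≠ 0) :
    φpoly ℓ = Polynomial.C (ℓ e0) * (Polynomial.X - Polynomial.C (-(ℓ e1) / ℓ e0)) := by
  have h : ℓ e0 * (-(ℓ e1) / ℓ e0) = -(ℓ e1) := by field_simp
  rw [mul_sub, ← Polynomial.C_mul, h, φpoly, map_neg, sub_neg_eq_add]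

lemma roots_φpoly_some {ℓ : Form} (h0 : ℓ e0 ≠ 0) :
    (φpoly ℓ).roots = {-(ℓ e1) / ℓ e0} := by
  rw [φpoly_of_slope_some h0, Polynomial.roots_C_mul _ h0, Polynomial.roots_X_sub_C]

/-- key multiset lemma: the slopes of the forms are determined by the product polynomial -/
lemma slope_multiset_eq (M : Multiset Form) (hM : ∀ ℓ ∈ M, ℓ ≠ 0) :
    (M.map φpoly).prod.natDegree ≤ Multiset.card M ∧
    M.map slope = ((M.map φpoly).prod.roots.map some) +
      Multiset.replicate (Multiset.card M - (M.map φpoly).prod.natDegree) none := by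
  induction M using Multiset.induction with
  | empty => simp
  | cons ℓ M ih =>
    have hℓ : ℓ ≠ 0 := hM ℓ (Multiset.mem_cons_self _ _)
    have hMtail : ∀ x ∈ M, x ≠ 0 := fun x hx => hM x (Multiset.mem_cons_of_mem hx)
    obtain ⟨hdeg, hslope⟩ := ih hMtail
    have hqne : (M.map φpoly).prod ≠ 0 := by
      apply Multiset.prod_ne_zero
      intro h0
      obtain ⟨x, hx, hx0⟩ := Multiset.mem_map.1 h0
      exact φpoly_ne_zero (hMtail x hx) hx0
    have hprodcons : ((ℓ ::ₘ M).map φpoly).prod = φpoly ℓ * (M.map φpoly).prod := by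
      rw [Multiset.map_cons, Multiset.prod_cons]
    by_cases h0 : ℓ e0 = 0
    · have hφ : φpoly ℓ = Polynomial.C (ℓ e1) := φpoly_of_slope_none h0
      have h1 : ℓ e1 ≠ 0 := fun h1 => hℓ ((form_eq_zero_iff ℓ).2 ⟨h0, h1⟩)
      have hdeg' : ((ℓ ::ₘ M).map φpoly).prod.natDegree = (M.map φpoly).prod.natDegree := by
        rw [hprodcons, hφ, Polynomial.natDegree_C_mul h1]
      have hroots' : ((ℓ ::ₘ M).map φpoly).prod.roots = (M.map φpoly).prod.roots := by
        rw [hprodcons, hφ, Polynomial.roots_C_mul _ h1]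
      constructor
      · rw [hdeg', Multiset.card_cons]; omega
      · rw [hdeg', hroots', Multiset.map_cons, Multiset.card_cons]
        have : slope ℓ = none := by rw [slope, if_pos h0]
        rw [this, hslope]
        have hsub : Multiset.card M + 1 - (M.map φpoly).prod.natDegree
            = (Multiset.card M - (M.map φpoly).prod.natDegree) + 1 := by omega
        rw [hsub, Multiset.replicate_succ, Multiset.add_cons]
    · have hφ : φpoly ℓ = Polynomial.C (ℓ e0) * (Polynomial.X - Polynomial.C (-(ℓ e1) / ℓ e0)) :=
        φpoly_of_slope_some h0
      have hφne : φpoly ℓ ≠ 0 := φpoly_ne_zero hℓ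
      have hdeg1 : (φpoly ℓ).natDegree = 1 := Polynomial.natDegree_linear h0
      have hdeg' : ((ℓ ::ₘ M).map φpoly).prod.natDegree = (M.map φpoly).prod.natDegree + 1 := by
        rw [hprodcons, Polynomial.natDegree_mul hφne hqne, hdeg1, add_comm]
      have hroots' : ((ℓ ::ₘ M).map φpoly).prod.roots
          = (-(ℓ e1) / ℓ e0) ::ₘ (M.map φpoly).prod.roots := by
        rw [hprodcons, Polynomial.roots_mul (mul_ne_zero hφne hqne), roots_φpoly_some h0,
          Multiset.singleton_add]
      constructor
      · rw [hdeg', Multiset.card_cons]; omega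
      · rw [hdeg', hroots', Multiset.map_cons, Multiset.card_cons]
        have : slope ℓ = some (-(ℓ e1) / ℓ e0) := by rw [slope, if_neg h0]
        rw [this, hslope, Multiset.map_cons]
        have hsub : Multiset.card M + 1 - ((M.map φpoly).prod.natDegree + 1)
            = Multiset.card M - (M.map φpoly).prod.natDegree := by omega
        rw [hsub, Multiset.cons_add]

/-- proportionality of forms with nested kernels -/
lemma exists_smul_of_ker_le {ℓ ℓ' : Form} (h' : ℓ' ≠ 0)
    (hle : LinearMap.ker ℓ' ≤ LinearMap.ker ℓ) : ∃ u : ℂ, ∀ v, ℓ v = u * ℓ' v := by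
  obtain ⟨w, hw⟩ : ∃ w, ℓ' w ≠ 0 := by
    by_contra h
    push_neg at h
    exact h' (LinearMap.ext fun v => h v)
  refine ⟨ℓ w / ℓ' w, fun v => ?_⟩
  have hker : v - (ℓ' v / ℓ' w) • w ∈ LinearMap.ker ℓ' := by
    rw [LinearMap.mem_ker, map_sub, LinearMap.map_smul, smul_eq_mul, div_mul_cancel₀ _ hw, sub_self]
  have := hle hker
  rw [LinearMap.mem_ker, map_sub, LinearMap.map_smul, smul_eq_mul, sub_eq_zero] at this
  rw [this]
  field_simp

lemma exists_smul_ne_zero_of_ker_eq {ℓ ℓ' : Form} (h : ℓ ≠ 0) (h' : ℓ' ≠ 0)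
    (hk : LinearMap.ker ℓ = LinearMap.ker ℓ') :
    ∃ u : ℂ, u ≠ 0 ∧ ∀ v, ℓ v = u * ℓ' v := by
  obtain ⟨u, hu⟩ := exists_smul_of_ker_le h' hk.ge
  refine ⟨u, ?_, hu⟩
  rintro rfl
  exact h (LinearMap.ext fun v => by rw [hu v, zero_mul]; rfl)


def lform (a b : ℂ) : Form := a • LinearMap.proj 0 + b • LinearMap.proj 1

@[simp] lemma lform_apply (a b : ℂ) (v : V2) : lform a b v = a * v 0 + b * v 1 := by
  simp [lform, smul_eq_mul]

lemma lform_ne_zero {a b : ℂ} (h : ¬(a = 0 ∧ b = 0)) : lform a b ≠ 0 := by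
  intro hz
  rw [form_eq_zero_iff] at hz
  obtain ⟨h0, h1⟩ := hz
  simp [e0, e1] at h0 h1
  exact h ⟨h0, h1⟩

/-- homogeneous scaling -/
lemma eval_smul_hom (f : MvPolynomial (Fin 2) ℂ) (d : ℕ) (hf : f.IsHomogeneous d)
    (c : ℂ) (v : V2) : eval (c • v) f = c ^ d * eval v f := by
  rw [eval_eq, eval_eq, Finset.mul_sum]
  apply Finset.sum_congr rfl
  intro m hm
  have hdeg : ∑ i ∈ m.support, m i = d := by
    have h1 := hf (mem_support_iff.1 hm)
    rw [Pi.one_def, ← Finsupp.degree_eq_weight_one] at h1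
    simpa [Finsupp.degree_apply] using h1
  calc coeff m f * ∏ i ∈ m.support, (c • v) i ^ m i
      = coeff m f * ∏ i ∈ m.support, (c ^ m i * v i ^ m i) := by
        apply congrArg
        apply Finset.prod_congr rfl
        intro i _
        rw [Pi.smul_apply, smul_eq_mul, mul_pow]
    _ = coeff m f * ((∏ i ∈ m.support, c ^ m i) * ∏ i ∈ m.support, v i ^ m i) := by
        rw [Finset.prod_mul_distrib]
    _ = c ^ d * (coeff m f * ∏ i ∈ m.support, v i ^ m i) := by
        rw [Finset.prod_pow_eq_pow_sum, hdeg]; ring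

/-- the dehomogenization -/
def dehom (f : MvPolynomial (Fin 2) ℂ) : Polynomial ℂ :=
  eval₂ Polynomial.C ![Polynomial.X, 1] f

lemma eval_dehom (f : MvPolynomial (Fin 2) ℂ) (t : ℂ) :
    (dehom f).eval t = eval ![t, 1] f := by
  rw [dehom, polynomial_eval_eval₂]
  have h1 : (Polynomial.evalRingHom t).comp Polynomial.C = RingHom.id ℂ := by
    ext a; simp
  have h2 : (fun s => Polynomial.eval t (![Polynomial.X, 1] s)) = (![t, 1] : Fin 2 → ℂ) := by
    funext s
    fin_cases s <;> simp
  rw [h1, h2]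
  rfl

lemma dehom_natDegree_le (f : MvPolynomial (Fin 2) ℂ) (d : ℕ) (hf : f.IsHomogeneous d) :
    (dehom f).natDegree ≤ d := by
  rw [dehom]
  conv_lhs => rw [f.as_sum]
  rw [eval₂_sum]
  apply Polynomial.natDegree_sum_le_of_forall_le
  intro m hm
  rw [eval₂_monomial, Finsupp.prod_pow]
  have hm0 : m 0 ≤ d := by
    have h1 := hf (mem_support_iff.1 hm)
    rw [Pi.one_def, ← Finsupp.degree_eq_weight_one] at h1
    calc m 0 ≤ m.degree := Finsupp.le_degree 0 m
      _ = d := h1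
  calc (Polynomial.C (coeff m f) * ∏ i, (![Polynomial.X, 1] : Fin 2 → Polynomial ℂ) i ^ m i).natDegree
      ≤ (∏ i, (![Polynomial.X, 1] : Fin 2 → Polynomial ℂ) i ^ m i).natDegree :=
        Polynomial.natDegree_C_mul_le _ _
    _ ≤ d := by
        rw [Fin.prod_univ_two]
        simp only [Matrix.cons_val_zero, Matrix.cons_val_one, Matrix.head_cons, one_pow, mul_one]
        rw [Polynomial.natDegree_X_pow]
        exact hm0


def lpoly (ℓ : Form) : MvPolynomial (Fin 2) ℂ := C (ℓ e0) * X 0 + C (ℓ e1) * X 1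

lemma eval_lpoly (ℓ : Form) (v : V2) : eval v (lpoly ℓ) = ℓ v := by
  have h : eval v (lpoly ℓ) = ℓ e0 * v 0 + ℓ e1 * v 1 := by simp [lpoly]
  rw [h, apply_eq ℓ v]
  ring

lemma cancel_X1 (f g : MvPolynomial (Fin 2) ℂ)
    (h : ∀ v : V2, v 1 * eval v f = v 1 * eval v g) : f = g := by
  have h2 : X 1 * f = X 1 * g := by
    apply MvPolynomial.funext
    intro v
    simpa using h v
  exact mul_left_cancel₀ (MvPolynomial.X_ne_zero 1) h2

lemma smul_decomp (v : V2) (hv1 : v 1 ≠ 0) : v = v 1 • ![v 0 / v 1, 1] := by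
  funext i
  fin_cases i <;> simp [smul_eq_mul]
  rw [mul_div_cancel₀ _ hv1]

lemma splitting (f : MvPolynomial (Fin 2) ℂ) (hf0 : f ≠ 0) (d : ℕ)
    (hfhom : f.IsHomogeneous d) :
    ∃ (c : ℂ) (M : Multiset Form), c ≠ 0 ∧ (∀ ℓ ∈ M, ℓ ≠ 0) ∧
      ∀ v : V2, eval v f = c * (M.map (fun ℓ => ℓ v)).prod := by
  set p := dehom f with hp
  have hscale : ∀ v : V2, v 1 ≠ 0 → eval v f = v 1 ^ d * p.eval (v 0 / v 1) := by
    intro v hv1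
    rw [eval_dehom]
    conv_lhs => rw [smul_decomp v hv1]
    exact eval_smul_hom f d hfhom _ _
  have hp0 : p ≠ 0 := by
    intro hpz
    apply hf0
    apply cancel_X1 f 0
    intro v
    simp only [map_zero, mul_zero]
    by_cases hv1 : v 1 = 0
    · rw [hv1, zero_mul]
    · rw [hscale v hv1, hpz, Polynomial.eval_zero, mul_zero, mul_zero]
  have hsplit : p.Splits := IsAlgClosed.splits p
  have hfact := Polynomial.Splits.eq_prod_roots hsplit
  have hcardroots : p.roots.card = p.natDegree := Polynomial.splits_iff_card_roots.1 hsplit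
  have hdle : p.natDegree ≤ d := dehom_natDegree_le f d hfhom
  set c := p.leadingCoeff with hcdef
  have hc : c ≠ 0 := Polynomial.leadingCoeff_ne_zero.2 hp0
  set M : Multiset Form := p.roots.map (fun r => lform 1 (-r)) +
      Multiset.replicate (d - p.natDegree) (lform 0 1) with hMdef
  have hMne : ∀ ℓ ∈ M, ℓ ≠ 0 := by
    intro ℓ hℓ
    rw [hMdef, Multiset.mem_add] at hℓ
    rcases hℓ with hℓ | hℓ
    · obtain ⟨r, _, rfl⟩ := Multiset.mem_map.1 hℓ
      exact lform_ne_zero (by simp)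
    · rw [Multiset.eq_of_mem_replicate hℓ]
      exact lform_ne_zero (by simp)
  refine ⟨c, M, hc, hMne, ?_⟩
  have heval : ∀ t : ℂ, p.eval t = c * (p.roots.map (fun a => t - a)).prod := by
    intro t
    conv_lhs => rw [hfact]
    rw [Polynomial.eval_mul, Polynomial.eval_C, Polynomial.eval_multiset_prod,
      Multiset.map_map]
    refine congrArg _ (congrArg _ ?_)
    exact Multiset.map_congr rfl (fun a _ => by simp)
  -- prove polynomial identity by cancellation
  have hfF : f = C c * (M.map lpoly).prod := by
    apply cancel_X1
    intro v
    rw [eval_mul, eval_C, map_multiset_prod, Multiset.map_map]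
    have hmm : Multiset.map (eval v ∘ lpoly) M = Multiset.map (fun ℓ => ℓ v) M :=
      Multiset.map_congr rfl (fun ℓ _ => eval_lpoly ℓ v)
    rw [hmm]
    by_cases hv1 : v 1 = 0
    · rw [hv1, zero_mul, zero_mul]
    · rw [hscale v hv1, heval]
      rw [hMdef, Multiset.map_add, Multiset.prod_add, Multiset.map_map,
        Multiset.map_replicate, Multiset.prod_replicate]
      have h1 : ((lform 0 1) : Form) v = v 1 := by simp
      have h2 : Multiset.map ((fun ℓ : Form => ℓ v) ∘ fun r => lform 1 (-r)) p.roots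
          = Multiset.map (fun r => (v 0 / v 1 - r) * v 1) p.roots := by
        apply Multiset.map_congr rfl
        intro r _
        simp only [Function.comp_apply, lform_apply, one_mul, neg_mul]
        field_simp
        ring
      rw [h1, h2]
      have h3 : (Multiset.map (fun r => (v 0 / v 1 - r) * v 1) p.roots).prod
          = (Multiset.map (fun r => v 0 / v 1 - r) p.roots).prod * v 1 ^ p.natDegree := by
        rw [Multiset.prod_map_mul]
        congr 1
        rw [Multiset.map_const', Multiset.prod_replicate, hcardroots]
      rw [h3]
      have hpow : v 1 ^ p.natDegree * v 1 ^ (d - p.natDegree) = v 1 ^ d := by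
        rw [← pow_add]
        congr 1
        omega
      ring_nf
      rw [← hpow]
      ring
  intro v
  conv_lhs => rw [hfF]
  rw [eval_mul, eval_C, map_multiset_prod, Multiset.map_map]
  congr 2
  exact Multiset.map_congr rfl (fun ℓ _ => eval_lpoly ℓ v)

/-- uniqueness of the kernel multiset -/
lemma ker_multiset_eq (M M' : Multiset Form) (hM : ∀ ℓ ∈ M, ℓ ≠ 0) (hM' : ∀ ℓ ∈ M', ℓ ≠ 0)
    (hcard : Multiset.card M = Multiset.card M') (c : ℂ) (hc : c ≠ 0)
    (h : ∀ v : V2, (M.map (fun ℓ => ℓ v)).prod = c * (M'.map (fun ℓ => ℓ v)).prod) :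
    M.map LinearMap.ker = M'.map LinearMap.ker := by
  set q := (M.map φpoly).prod with hq
  set q' := (M'.map φpoly).prod with hq'
  have hqq' : q = Polynomial.C c * q' := by
    apply Polynomial.funext
    intro t
    rw [Polynomial.eval_mul, Polynomial.eval_C, hq, hq', Polynomial.eval_multiset_prod,
      Polynomial.eval_multiset_prod, Multiset.map_map, Multiset.map_map]
    have e1 : Multiset.map (Polynomial.eval t ∘ φpoly) M = Multiset.map (fun ℓ => ℓ ![t, 1]) M :=
      Multiset.map_congr rfl (fun ℓ _ => eval_φpoly ℓ t)
    have e2 : Multiset.map (Polynomial.eval t ∘ φpoly) M' = Multiset.map (fun ℓ => ℓ ![t, 1]) M' :=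
      Multiset.map_congr rfl (fun ℓ _ => eval_φpoly ℓ t)
    rw [e1, e2]
    exact h ![t, 1]
  have hroots : q.roots = q'.roots := by rw [hqq', Polynomial.roots_C_mul _ hc]
  have hdeg : q.natDegree = q'.natDegree := by rw [hqq', Polynomial.natDegree_C_mul hc]
  obtain ⟨_, hs⟩ := slope_multiset_eq M hM
  obtain ⟨_, hs'⟩ := slope_multiset_eq M' hM'
  have hslope : M.map slope = M'.map slope := by
    rw [hs, hs', ← hq, ← hq', hroots, hdeg, hcard]
  calc M.map LinearMap.ker = M.map (lineOf ∘ slope) :=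
        Multiset.map_congr rfl (fun ℓ hℓ => ker_eq_lineOf (hM ℓ hℓ))
    _ = (M.map slope).map lineOf := (Multiset.map_map _ _ _).symm
    _ = (M'.map slope).map lineOf := by rw [hslope]
    _ = M'.map (lineOf ∘ slope) := Multiset.map_map _ _ _
    _ = M'.map LinearMap.ker :=
        (Multiset.map_congr rfl (fun ℓ hℓ => ker_eq_lineOf (hM' ℓ hℓ))).symm


/-- action of `GL₂` on submodules of `ℂ²` -/
def glmap (m : Matrix.GeneralLinearGroup (Fin 2) ℂ) (Q : Submodule ℂ V2) : Submodule ℂ V2 :=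
  Q.map (Matrix.mulVecLin ((m : Matrix (Fin 2) (Fin 2) ℂ)))

lemma glmap_mul (m m' : Matrix.GeneralLinearGroup (Fin 2) ℂ) (Q : Submodule ℂ V2) :
    glmap (m * m') Q = glmap m (glmap m' Q) := by
  rw [glmap, glmap, glmap, Units.val_mul, Matrix.mulVecLin_mul, Submodule.map_comp]

lemma glmap_one (Q : Submodule ℂ V2) : glmap 1 Q = Q := by
  rw [glmap, Units.val_one, Matrix.mulVecLin_one, Submodule.map_id]

lemma glmap_inv_glmap (m : Matrix.GeneralLinearGroup (Fin 2) ℂ) (Q : Submodule ℂ V2) :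
    glmap m (glmap m⁻¹ Q) = Q := by
  rw [← glmap_mul, mul_inv_cancel, glmap_one]

lemma glmap_glmap_inv (m : Matrix.GeneralLinearGroup (Fin 2) ℂ) (Q : Submodule ℂ V2) :
    glmap m⁻¹ (glmap m Q) = Q := by
  rw [← glmap_mul, inv_mul_cancel, glmap_one]

lemma glmap_injective (m : Matrix.GeneralLinearGroup (Fin 2) ℂ) :
    Function.Injective (glmap m) := by
  intro Q Q' h
  have := congrArg (glmap m⁻¹) h
  rwa [glmap_glmap_inv, glmap_glmap_inv] at this

/-- pullback of a form -/
def fcomp (m : Matrix.GeneralLinearGroup (Fin 2) ℂ) (ℓ : Form) : Form :=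
  ℓ ∘ₗ Matrix.mulVecLin ((m : Matrix (Fin 2) (Fin 2) ℂ))

lemma fcomp_apply (m : Matrix.GeneralLinearGroup (Fin 2) ℂ) (ℓ : Form) (v : V2) :
    fcomp m ℓ v = ℓ (((m : Matrix (Fin 2) (Fin 2) ℂ)).mulVec v) := rfl

lemma mulVec_inv_mulVec (m : Matrix.GeneralLinearGroup (Fin 2) ℂ) (v : V2) :
    ((m⁻¹ : Matrix.GeneralLinearGroup (Fin 2) ℂ) : Matrix (Fin 2) (Fin 2) ℂ).mulVec
      (((m : Matrix (Fin 2) (Fin 2) ℂ)).mulVec v) = v := by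
  rw [Matrix.mulVec_mulVec, ← Units.val_mul, inv_mul_cancel, Units.val_one, Matrix.one_mulVec]

lemma mulVec_mulVec_inv (m : Matrix.GeneralLinearGroup (Fin 2) ℂ) (v : V2) :
    ((m : Matrix (Fin 2) (Fin 2) ℂ)).mulVec
      (((m⁻¹ : Matrix.GeneralLinearGroup (Fin 2) ℂ) : Matrix (Fin 2) (Fin 2) ℂ).mulVec v) = v := by
  rw [Matrix.mulVec_mulVec, ← Units.val_mul, mul_inv_cancel, Units.val_one, Matrix.one_mulVec]

lemma fcomp_ne_zero (m : Matrix.GeneralLinearGroup (Fin 2) ℂ) {ℓ : Form} (hℓ : ℓ ≠ 0) :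
    fcomp m ℓ ≠ 0 := by
  intro h
  apply hℓ
  apply LinearMap.ext
  intro v
  have h2 : fcomp m ℓ (((m⁻¹ : Matrix.GeneralLinearGroup (Fin 2) ℂ) :
      Matrix (Fin 2) (Fin 2) ℂ).mulVec v) = 0 := by rw [h]; rfl
  rw [fcomp_apply, mulVec_mulVec_inv] at h2
  simpa using h2

lemma ker_fcomp (m : Matrix.GeneralLinearGroup (Fin 2) ℂ) (ℓ : Form) :
    LinearMap.ker (fcomp m ℓ) = glmap m⁻¹ (LinearMap.ker ℓ) := by
  ext x
  simp only [LinearMap.mem_ker, glmap, Submodule.mem_map, fcomp]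
  constructor
  · intro hx
    refine ⟨((m : Matrix (Fin 2) (Fin 2) ℂ)).mulVec x, ?_, ?_⟩
    · simpa [Matrix.mulVecLin_apply] using hx
    · rw [Matrix.mulVecLin_apply]
      exact mulVec_inv_mulVec m x
  · rintro ⟨y, hy, rfl⟩
    simp only [LinearMap.coe_comp, Function.comp_apply, Matrix.mulVecLin_apply]
    rw [mulVec_mulVec_inv]
    exact hy


end RelInv

/-- Factorization of relative invariants: let `G` be a finite subgroup of GL₂(ℂ) and
`f` a nonzero homogeneous polynomial of positive degree with `f(gv) = χ(g)f(v)` for a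
homomorphism `χ : G → ℂˣ`.  Then `f = c·∏ᵢ f_{Pᵢ}^{mᵢ}` for finitely many lines
`Pᵢ = ker aᵢ` in pairwise distinct `G`-orbits, where
`f_{Pᵢ}(v) = ∏ⱼ aᵢ(gᵢⱼ v)` over a complete set `gᵢⱼ` of representatives of `Hᵢ\G`,
`Hᵢ` being the stabilizer of the line `Pᵢ` in `G`. -/
theorem relative_invariant_factorization
    (G : Subgroup (Matrix.GeneralLinearGroup (Fin 2) ℂ)) (hG : Finite G)
    (f : MvPolynomial (Fin 2) ℂ) (hf0 : f ≠ 0)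
    (d : ℕ) (hd : 0 < d) (hfhom : f.IsHomogeneous d)
    (χ : G →* ℂˣ)
    (hrel : ∀ (g : G) (v : Fin 2 → ℂ),
      MvPolynomial.eval
          (((g : Matrix.GeneralLinearGroup (Fin 2) ℂ) :
              Matrix (Fin 2) (Fin 2) ℂ).mulVec v) f =
        (χ g : ℂ) * MvPolynomial.eval v f) :
    ∃ (r : ℕ) (a : Fin r → ((Fin 2 → ℂ) →ₗ[ℂ] ℂ)) (mult : Fin r → ℕ) (c : ℂ)
      (n : Fin r → ℕ) (reps : (i : Fin r) → Fin (n i) → G),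
      (∀ i, a i ≠ 0) ∧ (∀ i, 0 < mult i) ∧ c ≠ 0 ∧
      -- the lines ker (a i) lie in pairwise distinct G-orbits
      (∀ i j, i ≠ j → ∀ g : G,
        Submodule.map
            (Matrix.mulVecLin ((g : Matrix.GeneralLinearGroup (Fin 2) ℂ) :
              Matrix (Fin 2) (Fin 2) ℂ))
            (LinearMap.ker (a i)) ≠ LinearMap.ker (a j)) ∧
      -- reps i is a complete set of representatives of Hᵢ\G,
      -- where Hᵢ = {g ∈ G : g·(ker aᵢ) = ker aᵢ}
      (∀ (i : Fin r) (g : G), ∃! t : Fin (n i),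
        Submodule.map
            (Matrix.mulVecLin
              ((((g : Matrix.GeneralLinearGroup (Fin 2) ℂ) *
                  ((reps i t : Matrix.GeneralLinearGroup (Fin 2) ℂ))⁻¹) :
                Matrix (Fin 2) (Fin 2) ℂ)))
            (LinearMap.ker (a i)) = LinearMap.ker (a i)) ∧
      -- the factorization f = c·∏ᵢ f_{Pᵢ}^{mᵢ}
      (∀ v : Fin 2 → ℂ,
        MvPolynomial.eval v f =
          c * ∏ i : Fin r,
            (∏ t : Fin (n i),
              a i (((reps i t : Matrix.GeneralLinearGroup (Fin 2) ℂ) :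
                Matrix (Fin 2) (Fin 2) ℂ).mulVec v)) ^ (mult i)) := by
  classical
  obtain ⟨c₀, M, hc₀, hMne, hfM⟩ := RelInv.splitting f hf0 d hfhom
  set K : Multiset (Submodule ℂ (Fin 2 → ℂ)) := M.map LinearMap.ker with hK
  -- G-invariance of the kernel multiset
  have hstabK' : ∀ g : G, K.map (RelInv.glmap (↑g)⁻¹) = K := by
    intro g
    have hMg : ∀ ℓ' ∈ M.map (RelInv.fcomp ↑g), ℓ' ≠ 0 := by
      intro ℓ' hℓ'
      obtain ⟨ℓ, hℓ, rfl⟩ := Multiset.mem_map.1 hℓ'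
      exact RelInv.fcomp_ne_zero _ (hMne ℓ hℓ)
    have hprod : ∀ v : Fin 2 → ℂ,
        ((M.map (RelInv.fcomp ↑g)).map (fun ℓ => ℓ v)).prod
          = (χ g : ℂ) * (M.map (fun ℓ => ℓ v)).prod := by
      intro v
      rw [Multiset.map_map]
      have h1 : Multiset.map ((fun ℓ => ℓ v) ∘ RelInv.fcomp ↑g) M
          = Multiset.map (fun ℓ : RelInv.Form =>
              ℓ (((g : Matrix.GeneralLinearGroup (Fin 2) ℂ) :
                Matrix (Fin 2) (Fin 2) ℂ).mulVec v)) M :=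
        Multiset.map_congr rfl (fun ℓ _ => rfl)
      rw [h1]
      have h2 := hrel g v
      rw [hfM, hfM] at h2
      have h3 : c₀ * (Multiset.map (fun ℓ : RelInv.Form =>
          ℓ (((g : Matrix.GeneralLinearGroup (Fin 2) ℂ) :
            Matrix (Fin 2) (Fin 2) ℂ).mulVec v)) M).prod
          = c₀ * ((χ g : ℂ) * (Multiset.map (fun ℓ => ℓ v) M).prod) := by
        rw [h2]; ring
      exact mul_left_cancel₀ hc₀ h3
    have hker := RelInv.ker_multiset_eq (M.map (RelInv.fcomp ↑g)) M hMg hMne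
      (by rw [Multiset.card_map]) (χ g : ℂ) (χ g).ne_zero hprod
    rw [Multiset.map_map] at hker
    have h3 : Multiset.map (LinearMap.ker ∘ RelInv.fcomp ↑g) M
        = Multiset.map (RelInv.glmap (↑g)⁻¹ ∘ LinearMap.ker) M :=
      Multiset.map_congr rfl (fun ℓ _ => RelInv.ker_fcomp ↑g ℓ)
    rw [h3, ← Multiset.map_map] at hker
    exact hker
  have hstabK : ∀ g : G, K.map (RelInv.glmap ↑g) = K := by
    intro g
    have h := hstabK' g⁻¹
    have he : ((g⁻¹ : G) : Matrix.GeneralLinearGroup (Fin 2) ℂ)⁻¹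
        = (g : Matrix.GeneralLinearGroup (Fin 2) ℂ) := by
      rw [← Subgroup.coe_inv, inv_inv]
    rwa [he] at h
  have hcount : ∀ (g : G) (Q : Submodule ℂ (Fin 2 → ℂ)),
      K.count (RelInv.glmap ↑g Q) = K.count Q := by
    intro g Q
    conv_lhs => rw [← hstabK g]
    exact Multiset.count_map_eq_count' _ _ (RelInv.glmap_injective _) _
  -- orbit equivalence
  set rel : Submodule ℂ (Fin 2 → ℂ) → Submodule ℂ (Fin 2 → ℂ) → Prop :=
    fun Q Q' => ∃ g : G, RelInv.glmap ↑g Q = Q' with hreldef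
  have hrel_refl : ∀ Q, rel Q Q := fun Q => ⟨1, by
    show RelInv.glmap ((1 : G) : Matrix.GeneralLinearGroup (Fin 2) ℂ) Q = Q
    rw [Subgroup.coe_one, RelInv.glmap_one]⟩
  have hrel_symm : ∀ {Q Q'}, rel Q Q' → rel Q' Q := by
    rintro Q Q' ⟨g, rfl⟩
    refine ⟨g⁻¹, ?_⟩
    show RelInv.glmap ((g⁻¹ : G) : Matrix.GeneralLinearGroup (Fin 2) ℂ) _ = Q
    rw [Subgroup.coe_inv, RelInv.glmap_glmap_inv]
  have hrel_trans : ∀ {Q Q' Q''}, rel Q Q' → rel Q' Q'' → rel Q Q'' := by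
    rintro Q Q' Q'' ⟨g, rfl⟩ ⟨g', rfl⟩
    refine ⟨g' * g, ?_⟩
    show RelInv.glmap ((g' * g : G) : Matrix.GeneralLinearGroup (Fin 2) ℂ) _ = _
    rw [Subgroup.coe_mul, RelInv.glmap_mul]
  let sd : Setoid (Submodule ℂ (Fin 2 → ℂ)) := ⟨rel, ⟨hrel_refl, hrel_symm, hrel_trans⟩⟩
  let ρ : Submodule ℂ (Fin 2 → ℂ) → Submodule ℂ (Fin 2 → ℂ) :=
    fun Q => (@Quotient.mk'' _ sd Q).out
  have hρ : ∀ Q, rel (ρ Q) Q := fun Q => @Quotient.mk_out' _ sd Q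
  have hρeq : ∀ {Q Q'}, rel Q Q' → ρ Q = ρ Q' :=
    fun h => congrArg Quotient.out (Quotient.sound' h)
  set S : Finset (Submodule ℂ (Fin 2 → ℂ)) := K.toFinset with hS
  have hSmem : ∀ {Q}, Q ∈ S ↔ 0 < K.count Q := by
    intro Q
    rw [hS, Multiset.mem_toFinset, ← Multiset.count_pos]
  have hSstab : ∀ (g : G) {Q}, Q ∈ S → RelInv.glmap ↑g Q ∈ S := by
    intro g Q hQ
    rw [hSmem] at hQ ⊢
    rwa [hcount]
  have hρS : ∀ {Q}, Q ∈ S → ρ Q ∈ S := by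
    intro Q hQ
    obtain ⟨g, hg⟩ := hrel_symm (hρ Q)
    rw [← hg]
    exact hSstab g hQ
  set T : Finset (Submodule ℂ (Fin 2 → ℂ)) := S.image ρ with hT
  refine ⟨T.card, ?_⟩
  let eqv : Fin T.card ≃ {x // x ∈ T} := T.equivFin.symm
  let Qi : Fin T.card → Submodule ℂ (Fin 2 → ℂ) := fun i => (eqv i : Submodule ℂ (Fin 2 → ℂ))
  have hQiT : ∀ i, Qi i ∈ T := fun i => (eqv i).2
  have hQiS : ∀ i, Qi i ∈ S := by
    intro i
    obtain ⟨Q, hQ, hEq⟩ := Finset.mem_image.1 (hQiT i)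
    rw [← hEq]; exact hρS hQ
  have hρQi : ∀ i, ρ (Qi i) = Qi i := by
    intro i
    obtain ⟨Q, hQ, hEq⟩ := Finset.mem_image.1 (hQiT i)
    rw [← hEq]
    exact hρeq (hρ Q)
  have hQi_inj : Function.Injective Qi := fun i j h => eqv.injective (Subtype.ext h)
  -- selection of forms
  let ℓsel : Submodule ℂ (Fin 2 → ℂ) → RelInv.Form := fun Q =>
    if h : ∃ ℓ, ℓ ∈ M ∧ ℓ ≠ 0 ∧ LinearMap.ker ℓ = Q then h.choose else 0
  have hsel : ∀ {Q}, Q ∈ S → ℓsel Q ≠ 0 ∧ LinearMap.ker (ℓsel Q) = Q := by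
    intro Q hQ
    have hex : ∃ ℓ, ℓ ∈ M ∧ ℓ ≠ 0 ∧ LinearMap.ker ℓ = Q := by
      rw [hS, Multiset.mem_toFinset, hK] at hQ
      obtain ⟨ℓ, hℓ, hkℓ⟩ := Multiset.mem_map.1 hQ
      exact ⟨ℓ, hℓ, hMne ℓ hℓ, hkℓ⟩
    show (dite _ _ _ : RelInv.Form) ≠ 0 ∧ LinearMap.ker (dite _ _ _ : RelInv.Form) = Q
    rw [dif_pos hex]
    exact ⟨hex.choose_spec.2.1, hex.choose_spec.2.2⟩
  refine ⟨fun i => ℓsel (Qi i), fun i => K.count (Qi i), ?_⟩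
  have hkera : ∀ i, LinearMap.ker (ℓsel (Qi i)) = Qi i := fun i => (hsel (hQiS i)).2
  -- stabilizer subgroups and coset representatives
  let stab : Fin T.card → Subgroup G := fun i =>
    { carrier := {g : G | RelInv.glmap ↑g (Qi i) = Qi i}
      one_mem' := by
        show RelInv.glmap ((1 : G) : Matrix.GeneralLinearGroup (Fin 2) ℂ) (Qi i) = Qi i
        rw [Subgroup.coe_one, RelInv.glmap_one]
      mul_mem' := by
        intro g h hg hh
        show RelInv.glmap ((g * h : G) : Matrix.GeneralLinearGroup (Fin 2) ℂ) (Qi i) = Qi i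
        rw [Subgroup.coe_mul, RelInv.glmap_mul]
        rw [show RelInv.glmap (↑h) (Qi i) = Qi i from hh]
        exact hg
      inv_mem' := by
        intro g hg
        show RelInv.glmap ((g⁻¹ : G) : Matrix.GeneralLinearGroup (Fin 2) ℂ) (Qi i) = Qi i
        rw [Subgroup.coe_inv]
        conv_lhs => rw [← show RelInv.glmap (↑g) (Qi i) = Qi i from hg]
        rw [RelInv.glmap_glmap_inv] }
  have hstab_mem : ∀ i (g : G), g ∈ stab i ↔ RelInv.glmap ↑g (Qi i) = Qi i := fun i g => Iff.rfl
  haveI : ∀ i, Finite (Quotient (QuotientGroup.rightRel (stab i))) :=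
    fun i => Quotient.finite _
  have hex_eqR : ∀ i : Fin T.card,
      ∃ nn : ℕ, Nonempty (Quotient (QuotientGroup.rightRel (stab i)) ≃ Fin nn) :=
    fun i => Finite.exists_equiv_fin _
  choose n eqR0 using hex_eqR
  let eqR : (i : Fin T.card) → Quotient (QuotientGroup.rightRel (stab i)) ≃ Fin (n i) :=
    fun i => (eqR0 i).some
  let reps : (i : Fin T.card) → Fin (n i) → G := fun i t => ((eqR i).symm t).out
  have hreps_mk : ∀ i t, (Quotient.mk'' (reps i t) : Quotient (QuotientGroup.rightRel (stab i)))
      = (eqR i).symm t := fun i t => Quotient.out_eq' _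
  have hcoset : ∀ i (x y : G),
      ((Quotient.mk'' x : Quotient (QuotientGroup.rightRel (stab i))) = Quotient.mk'' y)
        ↔ y * x⁻¹ ∈ stab i := by
    intro i x y
    rw [Quotient.eq'']
    exact QuotientGroup.rightRel_apply
  -- orbits as finsets
  let O : Fin T.card → Finset (Submodule ℂ (Fin 2 → ℂ)) :=
    fun i => S.filter (fun Q => rel Q (Qi i))
  have hOmem : ∀ i Q, Q ∈ O i ↔ Q ∈ S ∧ rel Q (Qi i) := fun i Q => Finset.mem_filter
  have hcountO : ∀ i Q, Q ∈ O i → K.count Q = K.count (Qi i) := by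
    intro i Q h
    obtain ⟨hQS, g, hg⟩ := (hOmem i Q).1 h
    rw [← hg, hcount]
  -- the per-orbit product identity
  have hB : ∀ i : Fin T.card, ∃ e : ℂ, e ≠ 0 ∧ ∀ v : Fin 2 → ℂ,
      (∏ t : Fin (n i), ℓsel (Qi i)
        (((reps i t : Matrix.GeneralLinearGroup (Fin 2) ℂ) :
          Matrix (Fin 2) (Fin 2) ℂ).mulVec v))
      = e * ∏ Q ∈ O i, ℓsel Q v := by
    intro i
    set Qt : Fin (n i) → Submodule ℂ (Fin 2 → ℂ) :=
      fun t => RelInv.glmap ((reps i t : Matrix.GeneralLinearGroup (Fin 2) ℂ))⁻¹ (Qi i)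
      with hQt
    have hQtS : ∀ t, Qt t ∈ S := by
      intro t
      have h := hSstab (reps i t)⁻¹ (hQiS i)
      rwa [Subgroup.coe_inv] at h
    have hQtO : ∀ t, Qt t ∈ O i := by
      intro t
      refine (hOmem i _).2 ⟨hQtS t, reps i t, ?_⟩
      exact RelInv.glmap_inv_glmap _ _
    have hQt_inj : ∀ t t', Qt t = Qt t' → t = t' := by
      intro t t' h
      have h2 : RelInv.glmap ((reps i t' : Matrix.GeneralLinearGroup (Fin 2) ℂ)) (Qt t)
          = Qi i := by
        rw [h, hQt]
        exact RelInv.glmap_inv_glmap _ _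
      have h3 : reps i t' * (reps i t)⁻¹ ∈ stab i := by
        show RelInv.glmap (((reps i t' * (reps i t)⁻¹ : G) :
          Matrix.GeneralLinearGroup (Fin 2) ℂ)) (Qi i) = Qi i
        rw [Subgroup.coe_mul, Subgroup.coe_inv, RelInv.glmap_mul]
        exact h2
      have h4 := (hcoset i (reps i t) (reps i t')).2 h3
      rw [hreps_mk, hreps_mk] at h4
      exact (eqR i).symm.injective h4
    have hQt_surj : ∀ Q ∈ O i, ∃ t, Qt t = Q := by
      intro Q hQ
      obtain ⟨hQS, g, hg⟩ := (hOmem i Q).1 hQ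
      refine ⟨eqR i (Quotient.mk'' g), ?_⟩
      have h1 : (Quotient.mk'' (reps i (eqR i (Quotient.mk'' g))) :
          Quotient (QuotientGroup.rightRel (stab i))) = Quotient.mk'' g := by
        rw [hreps_mk, Equiv.symm_apply_apply]
      have h2 : g * (reps i (eqR i (Quotient.mk'' g)))⁻¹ ∈ stab i := (hcoset i _ g).1 h1
      have h3 : RelInv.glmap (((g * (reps i (eqR i (Quotient.mk'' g)))⁻¹ : G) :
          Matrix.GeneralLinearGroup (Fin 2) ℂ)) (Qi i) = Qi i := h2
      rw [Subgroup.coe_mul, Subgroup.coe_inv, RelInv.glmap_mul] at h3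
      have h4 : Q = RelInv.glmap ((g : Matrix.GeneralLinearGroup (Fin 2) ℂ))⁻¹ (Qi i) := by
        rw [← hg, RelInv.glmap_glmap_inv]
      rw [hQt, h4]
      conv_rhs => rw [← h3]
      rw [RelInv.glmap_glmap_inv]
    have hprop : ∀ t : Fin (n i), ∃ u : ℂ, u ≠ 0 ∧ ∀ v,
        RelInv.fcomp ↑(reps i t) (ℓsel (Qi i)) v = u * ℓsel (Qt t) v := by
      intro t
      apply RelInv.exists_smul_ne_zero_of_ker_eq
      · exact RelInv.fcomp_ne_zero _ (hsel (hQiS i)).1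
      · exact (hsel (hQtS t)).1
      · rw [RelInv.ker_fcomp, hkera, (hsel (hQtS t)).2]
    choose u hu0 hu using hprop
    refine ⟨∏ t, u t, Finset.prod_ne_zero_iff.2 (fun t _ => hu0 t), ?_⟩
    intro v
    have h1 : ∀ t ∈ Finset.univ, ℓsel (Qi i)
        (((reps i t : Matrix.GeneralLinearGroup (Fin 2) ℂ) :
          Matrix (Fin 2) (Fin 2) ℂ).mulVec v) = u t * ℓsel (Qt t) v :=
      fun t _ => hu t v
    rw [Finset.prod_congr rfl h1, Finset.prod_mul_distrib]
    congr 1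
    exact Finset.prod_bij (fun t _ => Qt t) (fun t _ => hQtO t)
      (fun t _ t' _ h => hQt_inj t t' h)
      (fun Q hQ => by obtain ⟨t, ht⟩ := hQt_surj Q hQ; exact ⟨t, Finset.mem_univ t, ht⟩)
      (fun t _ => rfl)
  -- global proportionality
  have hA : ∃ e : ℂ, e ≠ 0 ∧ ∀ v : Fin 2 → ℂ,
      (M.map (fun ℓ => ℓ v)).prod = e * ∏ Q ∈ S, (ℓsel Q v) ^ K.count Q := by
    have hprop : ∀ ℓ ∈ M, ∃ u : ℂ, u ≠ 0 ∧ ∀ v, ℓ v = u * ℓsel (LinearMap.ker ℓ) v := by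
      intro ℓ hℓ
      have hkS : LinearMap.ker ℓ ∈ S := by
        rw [hS, Multiset.mem_toFinset, hK]
        exact Multiset.mem_map_of_mem _ hℓ
      exact RelInv.exists_smul_ne_zero_of_ker_eq (hMne ℓ hℓ) (hsel hkS).1 ((hsel hkS).2).symm
    let uF : RelInv.Form → ℂ := fun ℓ =>
      if h : ∃ u : ℂ, u ≠ 0 ∧ ∀ v, ℓ v = u * ℓsel (LinearMap.ker ℓ) v then h.choose else 1
    have huF : ∀ ℓ ∈ M, uF ℓ ≠ 0 ∧ ∀ v, ℓ v = uF ℓ * ℓsel (LinearMap.ker ℓ) v := by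
      intro ℓ hℓ
      have hex := hprop ℓ hℓ
      show (dite _ _ _ : ℂ) ≠ 0 ∧ ∀ v, ℓ v = (dite _ _ _ : ℂ) * ℓsel (LinearMap.ker ℓ) v
      rw [dif_pos hex]
      exact ⟨hex.choose_spec.1, hex.choose_spec.2⟩
    refine ⟨(M.map uF).prod, ?_, ?_⟩
    · apply Multiset.prod_ne_zero
      intro h0
      obtain ⟨ℓ, hℓ, h⟩ := Multiset.mem_map.1 h0
      exact (huF ℓ hℓ).1 h
    · intro v
      have h1 : M.map (fun ℓ => ℓ v) = M.map (fun ℓ => uF ℓ * ℓsel (LinearMap.ker ℓ) v) :=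
        Multiset.map_congr rfl (fun ℓ hℓ => (huF ℓ hℓ).2 v)
      rw [h1, Multiset.prod_map_mul]
      congr 1
      have h2 : M.map (fun ℓ => ℓsel (LinearMap.ker ℓ) v)
          = K.map (fun Q => ℓsel Q v) := by
        rw [hK, Multiset.map_map]
        rfl
      rw [h2]
      exact Finset.prod_multiset_map_count K _
  -- partition of S into orbits
  have hSunion : S = Finset.univ.biUnion O := by
    apply Finset.ext
    intro Q
    constructor
    · intro hQ
      have hρT : ρ Q ∈ T := Finset.mem_image_of_mem ρ hQ
      have hQi_eq : Qi (eqv.symm ⟨ρ Q, hρT⟩) = ρ Q := by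
        show ((eqv (eqv.symm ⟨ρ Q, hρT⟩)) : Submodule ℂ (Fin 2 → ℂ)) = ρ Q
        rw [Equiv.apply_symm_apply]
      refine Finset.mem_biUnion.2 ⟨eqv.symm ⟨ρ Q, hρT⟩, Finset.mem_univ _,
        (hOmem _ _).2 ⟨hQ, ?_⟩⟩
      rw [hQi_eq]
      exact hrel_symm (hρ Q)
    · intro hQ
      obtain ⟨i, _, hQO⟩ := Finset.mem_biUnion.1 hQ
      exact ((hOmem i Q).1 hQO).1
  have hOdisj : ((Finset.univ : Finset (Fin T.card)) : Set (Fin T.card)).PairwiseDisjoint O := by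
    intro i _ j _ hij
    show Disjoint (O i) (O j)
    rw [Finset.disjoint_left]
    intro Q hQi' hQj'
    apply hij
    apply hQi_inj
    have hri := ((hOmem i Q).1 hQi').2
    have hrj := ((hOmem j Q).1 hQj').2
    have hij' : rel (Qi i) (Qi j) := hrel_trans (hrel_symm hri) hrj
    rw [← hρQi i, ← hρQi j]
    exact hρeq hij'
  -- assemble
  obtain ⟨e, he0, heA⟩ := hA
  choose E hE0 hE using hB
  have hEE0 : (∏ i, (E i) ^ (K.count (Qi i))) ≠ 0 :=
    Finset.prod_ne_zero_iff.2 (fun i _ => pow_ne_zero _ (hE0 i))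
  refine ⟨c₀ * e / (∏ i, (E i) ^ (K.count (Qi i))), n, reps, ?_, ?_, ?_, ?_, ?_, ?_⟩
  · intro i
    exact (hsel (hQiS i)).1
  · intro i
    exact hSmem.1 (hQiS i)
  · exact div_ne_zero (mul_ne_zero hc₀ he0) hEE0
  · -- pairwise distinct orbits
    intro i j hij g h
    rw [hkera i, hkera j] at h
    apply hij
    apply hQi_inj
    have hrelij : rel (Qi i) (Qi j) := ⟨g, h⟩
    rw [← hρQi i, ← hρQi j]
    exact hρeq hrelij
  · -- complete set of representatives
    intro i g
    have key : ∀ t : Fin (n i),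
        (Submodule.map (Matrix.mulVecLin
            ((((g : Matrix.GeneralLinearGroup (Fin 2) ℂ) *
              ((reps i t : Matrix.GeneralLinearGroup (Fin 2) ℂ))⁻¹) :
            Matrix (Fin 2) (Fin 2) ℂ)))
          (LinearMap.ker (ℓsel (Qi i))) = LinearMap.ker (ℓsel (Qi i)))
        ↔ eqR i (Quotient.mk'' g) = t := by
      intro t
      rw [hkera i]
      have hcoe : ((g : Matrix.GeneralLinearGroup (Fin 2) ℂ) *
          ((reps i t : Matrix.GeneralLinearGroup (Fin 2) ℂ))⁻¹)
          = ((g * (reps i t)⁻¹ : G) : Matrix.GeneralLinearGroup (Fin 2) ℂ) := by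
        rw [Subgroup.coe_mul, Subgroup.coe_inv]
      constructor
      · intro h
        have hmem : g * (reps i t)⁻¹ ∈ stab i := by
          show RelInv.glmap _ (Qi i) = Qi i
          rw [← hcoe]
          exact h
        have h4 := (hcoset i (reps i t) g).2 hmem
        rw [hreps_mk] at h4
        rw [← h4, Equiv.apply_symm_apply]
      · intro h
        have h4 : (Quotient.mk'' (reps i t) :
            Quotient (QuotientGroup.rightRel (stab i))) = Quotient.mk'' g := by
          rw [hreps_mk, ← h, Equiv.symm_apply_apply]
        have hmem := (hcoset i (reps i t) g).1 h4
        have h5 : RelInv.glmap (((g * (reps i t)⁻¹ : G) :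
            Matrix.GeneralLinearGroup (Fin 2) ℂ)) (Qi i) = Qi i := hmem
        rw [← hcoe] at h5
        exact h5
    refine ⟨eqR i (Quotient.mk'' g), (key _).2 rfl, fun t ht => ((key t).1 ht).symm⟩
  · -- the factorization identity
    intro v
    rw [hfM v, heA v]
    have hFi : ∀ i ∈ (Finset.univ : Finset (Fin T.card)),
        (∏ t : Fin (n i), ℓsel (Qi i)
          (((reps i t : Matrix.GeneralLinearGroup (Fin 2) ℂ) :
            Matrix (Fin 2) (Fin 2) ℂ).mulVec v)) ^ (K.count (Qi i))
        = (E i) ^ (K.count (Qi i)) * (∏ Q ∈ O i, ℓsel Q v) ^ (K.count (Qi i)) := by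
      intro i _
      rw [hE i v, mul_pow]
    rw [Finset.prod_congr rfl hFi, Finset.prod_mul_distrib]
    have hON : ∀ i ∈ (Finset.univ : Finset (Fin T.card)),
        (∏ Q ∈ O i, ℓsel Q v) ^ (K.count (Qi i))
          = ∏ Q ∈ O i, (ℓsel Q v) ^ K.count Q := by
      intro i _
      rw [← Finset.prod_pow]
      exact (Finset.prod_congr rfl (fun Q hQ => by rw [hcountO i Q hQ])).symm
    rw [Finset.prod_congr rfl hON]
    have hSsplit : ∏ Q ∈ S, (ℓsel Q v) ^ K.count Q
        = ∏ i, ∏ Q ∈ O i, (ℓsel Q v) ^ K.count Q := by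
      conv_lhs => rw [hSunion]
      exact Finset.prod_biUnion hOdisj
    rw [hSsplit]
    field_simp


end RelInvAux
end
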